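/- arXiv:1608.06573 — 5 statements merged into one kernel-verified Lean document; each statement's English description precedes it below -/
import Mathlib

section
/- Let T be a linear operator on polynomials such that φₖ := T[xᵏ] is a standard L-base for L = d²/dx² − q (i.e. φ₀'' = qφ₀, φ₁'' = qφ₁, and φₖ'' − qφₖ = k(k−1)φₖ₋₂ with φₖ(0) = φₖ'(0) = 0 for k ≥ 2). If T[1] = 0, then T[xᵏ] = 0 for every even k ≥ 0, and consequently T = T∘P₋ on polynomials, where (P₋u)(x) = (u(x)−u(−x))/2. -/
/-!
Starting from `φ₀ = T[1] = 0`, induct over even `k = 2m + 2`: the inhomogeneous term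
`k (k - 1) φₖ₋₂` vanishes, so `φₖ` solves `φ'' = q φ` with zero Cauchy data at `0` and is zero by
uniqueness. Uniqueness is local (on a short interval carrying little mass of `|q|`, the sup of
`|φ| + |φ'|` is at most half of itself) and spreads over `[a, b]` by connectedness. Finally
`p - P₋ p` is even, hence a combination of even monomials, which `T` kills.
-/

open MeasureTheory Set Polynomial Topology Filter
open scoped Interval

theorem IsPreconnected.eqOn_const_of_eventually_eq {X Y : Type*} [TopologicalSpace X]
    [TopologicalSpace Y] [T1Space Y] {s : Set X} {F : X → Y} {c : Y} {x₀ : X}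
    (hs : IsPreconnected s) (hF : ContinuousOn F s)
    (hloc : ∀ x ∈ s, F x = c → ∀ᶠ y in 𝓝[s] x, F y = c) (hx₀ : x₀ ∈ s) (hc : F x₀ = c) :
    EqOn F (fun _ ↦ c) s := by
  classical
  have hP : ContinuousOn (fun y ↦ decide (F y = c)) s := by
    intro x hx
    rw [ContinuousWithinAt, nhds_discrete, tendsto_pure]
    by_cases hx' : F x = c
    · filter_upwards [hloc x hx hx'] with y hy
      simp [hy, hx']
    · filter_upwards [(hF x hx).eventually_ne hx'] with y hy
      simp [hy, hx']
  intro x hx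
  simpa [hc] using hs.constant hP hx₀ hx

theorem MeasureTheory.IntegrableOn.intervalIntegrable_of_mem_Icc {E : Type*}
    [NormedAddCommGroup E] {h : ℝ → E} {a b u v : ℝ} (hh : IntegrableOn h (Icc a b))
    (hu : u ∈ Icc a b) (hv : v ∈ Icc a b) : IntervalIntegrable h volume u v :=
  (hh.mono_set (uIcc_subset_Icc hu hv)).intervalIntegrable

theorem MeasureTheory.IntegrableOn.continuousOn_primitive_Icc {E : Type*} [NormedAddCommGroup E]
    [NormedSpace ℝ E] {h : ℝ → E} {a b x₀ : ℝ} (hh : IntegrableOn h (Icc a b))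
    (hx₀ : x₀ ∈ Icc a b) : ContinuousOn (fun t ↦ ∫ s in x₀..t, h s) (Icc a b) := by
  have hab : a ≤ b := hx₀.1.trans hx₀.2
  simpa [uIcc_of_le hab] using intervalIntegral.continuousOn_primitive_interval'
    (hh.intervalIntegrable_of_mem_Icc (left_mem_Icc.2 hab) (right_mem_Icc.2 hab))
    (by rwa [uIcc_of_le hab])

theorem MeasureTheory.IntegrableOn.tendsto_setIntegral_inter_closedBall {E : Type*}
    [NormedAddCommGroup E] [NormedSpace ℝ E] {h : ℝ → E} {s : Set ℝ} (hh : IntegrableOn h s)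
    (x : ℝ) :
    Tendsto (fun δ ↦ ∫ t in s ∩ Metric.closedBall x δ, h t) (𝓝 0) (𝓝 0) := by
  have hvol : Tendsto (fun δ ↦ volume (Metric.closedBall x δ)) (𝓝 0) (𝓝 0) := by
    simp_rw [Real.volume_closedBall]
    simpa using ENNReal.tendsto_ofReal ((tendsto_id (x := 𝓝 (0 : ℝ))).const_mul 2)
  have hmeas : Tendsto (fun δ ↦ volume.restrict s (Metric.closedBall x δ)) (𝓝 0) (𝓝 0) :=
    tendsto_of_tendsto_of_tendsto_of_le_of_le tendsto_const_nhds hvol (fun _ ↦ zero_le)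
      fun δ ↦ Measure.restrict_apply_le _ _
  simpa [Measure.restrict_restrict Metric.isClosed_closedBall.measurableSet, inter_comm]
    using hh.tendsto_setIntegral_nhds_zero hmeas

theorem eqOn_zero_of_integral_system_of_small {q f g : ℝ → ℝ} {J : Set ℝ} {x : ℝ}
    (hJ : IsCompact J) (hJc : J.OrdConnected) (hx : x ∈ J)
    (hq : IntegrableOn q J) (hf : ContinuousOn f J) (hg : ContinuousOn g J)
    (hlen : ∀ t ∈ J, |t - x| ≤ 1 / 4) (hmass : ∫ s in J, |q s| ≤ 1 / 4)
    (hfg : ∀ t ∈ J, f t = ∫ s in x..t, g s) (hgq : ∀ t ∈ J, g t = ∫ s in x..t, q s * f s) :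
    EqOn (fun t ↦ (f t, g t)) 0 J := by
  obtain ⟨t₀, ht₀, hmax⟩ := hJ.exists_isMaxOn ⟨x, hx⟩ (hf.abs.add hg.abs)
  set M := |f t₀| + |g t₀|
  have hM : ∀ t ∈ J, |f t| ≤ M ∧ |g t| ≤ M := fun t ht ↦ by
    have : |f t| + |g t| ≤ M := hmax ht
    exact ⟨by linarith [abs_nonneg (g t)], by linarith [abs_nonneg (f t)]⟩
  have hM_nonneg : 0 ≤ M := by positivity
  have hI : ∀ t ∈ J, Ι x t ⊆ J := fun t ht ↦ uIoc_subset_uIcc.trans (hJc.uIcc_subset hx ht)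
  have hbound : ∀ t ∈ J, |f t| + |g t| ≤ M / 2 := by
    intro t ht
    have hf_le : |f t| ≤ M / 4 := by
      rw [hfg t ht]
      calc |∫ s in x..t, g s| ≤ M * |t - x| :=
            intervalIntegral.norm_integral_le_of_norm_le_const (f := g) fun s hs ↦
              (hM s (hI t ht hs)).2
        _ ≤ M * (1 / 4) := by gcongr; exact hlen t ht
        _ = M / 4 := by ring
    have hg_le : |g t| ≤ M / 4 := by
      rw [hgq t ht]
      calc |∫ s in x..t, q s * f s| ≤ ∫ s in Ι x t, ‖q s * f s‖ :=
            intervalIntegral.norm_integral_le_integral_norm_uIoc (f := fun s ↦ q s * f s)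
        _ ≤ ∫ s in Ι x t, |q s| * M := by
            refine setIntegral_mono_on ?_ ?_ measurableSet_uIoc fun s hs ↦ ?_
            · exact IntegrableOn.mono_set (hq.mul_continuousOn hf hJ).norm (hI t ht)
            · exact IntegrableOn.mono_set (hq.abs.mul_const M) (hI t ht)
            · rw [Real.norm_eq_abs, abs_mul]
              exact mul_le_mul_of_nonneg_left (hM s (hI t ht hs)).1 (abs_nonneg _)
        _ ≤ ∫ s in J, |q s| * M := by
            refine setIntegral_mono_set (hq.abs.mul_const M) ?_ (hI t ht).eventuallyLE
            filter_upwards with s using mul_nonneg (abs_nonneg _) hM_nonneg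
        _ = (∫ s in J, |q s|) * M := integral_mul_const M _
        _ ≤ M / 4 := by nlinarith [abs_nonneg (f t₀), abs_nonneg (g t₀)]
    linarith
  have hM0 : M ≤ 0 := by linarith [hbound t₀ ht₀]
  intro t ht
  have := hbound t ht
  simp only [Pi.zero_apply, Prod.mk_eq_zero]
  constructor <;> apply abs_nonpos_iff.1 <;> linarith [abs_nonneg (f t), abs_nonneg (g t)]

theorem eqOn_zero_of_integral_system {q f g : ℝ → ℝ} {a b x₀ : ℝ} (hx₀ : x₀ ∈ Icc a b)
    (hq : IntegrableOn q (Icc a b)) (hf : ContinuousOn f (Icc a b))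
    (hfg : ∀ t ∈ Icc a b, f t = ∫ s in x₀..t, g s)
    (hgq : ∀ t ∈ Icc a b, g t = ∫ s in x₀..t, q s * f s) :
    EqOn f 0 (Icc a b) := by
  have hqf : IntegrableOn (fun s ↦ q s * f s) (Icc a b) := hq.mul_continuousOn hf isCompact_Icc
  have hg : ContinuousOn g (Icc a b) := (hqf.continuousOn_primitive_Icc hx₀).congr hgq
  have hgI : IntegrableOn g (Icc a b) := hg.integrableOn_Icc
  have hloc : ∀ x ∈ Icc a b, (f x, g x) = 0 →
      ∀ᶠ y in 𝓝[Icc a b] x, (f y, g y) = 0 := by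
    intro x hx hx0
    obtain ⟨hfx, hgx⟩ := Prod.mk_eq_zero.1 hx0
    have hsmall : ∀ᶠ δ in 𝓝[>] (0 : ℝ),
        (δ ≤ 1 / 4 ∧ ∫ t in Icc a b ∩ Metric.closedBall x δ, |q t| ≤ 1 / 4) ∧ 0 < δ :=
      (eventually_nhdsWithin_of_eventually_nhds ((eventually_le_nhds (by norm_num)).and
        ((IntegrableOn.tendsto_setIntegral_inter_closedBall hq.abs x).eventually
          (Iic_mem_nhds (by norm_num))))).and self_mem_nhdsWithin
    obtain ⟨δ, ⟨hδ, hmass⟩, hδ0⟩ := hsmall.exists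
    have hJ : IsCompact (Icc a b ∩ Metric.closedBall x δ) :=
      isCompact_Icc.inter_right Metric.isClosed_closedBall
    have hJc : (Icc a b ∩ Metric.closedBall x δ).OrdConnected := by
      rw [Real.closedBall_eq_Icc]; infer_instance
    have hrebase : ∀ {h : ℝ → ℝ}, IntegrableOn h (Icc a b) → ∀ t ∈ Icc a b,
        ∫ s in x₀..t, h s = (∫ s in x₀..x, h s) + ∫ s in x..t, h s := fun hh t ht ↦
      (intervalIntegral.integral_add_adjacent_intervals
        (hh.intervalIntegrable_of_mem_Icc hx₀ hx) (hh.intervalIntegrable_of_mem_Icc hx ht)).symm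
    filter_upwards [inter_mem_nhdsWithin (Icc a b) (Metric.closedBall_mem_nhds x hδ0)] with y hy
    refine eqOn_zero_of_integral_system_of_small hJ hJc ⟨hx, Metric.mem_closedBall_self hδ0.le⟩
      (hq.mono_set inter_subset_left) (hf.mono inter_subset_left) (hg.mono inter_subset_left)
      (fun t ht ↦ ?_) hmass (fun t ht ↦ ?_) (fun t ht ↦ ?_) hy
    · rw [← Real.dist_eq]; exact (Metric.mem_closedBall.1 ht.2).trans hδ
    · rw [hfg t ht.1, hrebase hgI t ht.1, ← hfg x hx, hfx, zero_add]
    · rw [hgq t ht.1, hrebase hqf t ht.1, ← hgq x hx, hgx, zero_add]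
  have hF := IsPreconnected.eqOn_const_of_eventually_eq isPreconnected_Icc (hf.prodMk hg) hloc hx₀
    (by rw [hfg x₀ hx₀, hgq x₀ hx₀]; simp)
  exact fun t ht ↦ (Prod.mk_eq_zero.1 (hF ht)).1

theorem eq_add_integral_of_hasDerivWithinAt_Icc {E : Type*} [NormedAddCommGroup E]
    [NormedSpace ℝ E] [CompleteSpace E] {f f' : ℝ → E} {a b x₀ t : ℝ}
    (hderiv : ∀ x ∈ Icc a b, HasDerivWithinAt f (f' x) (Icc a b) x)
    (hint : IntegrableOn f' (Icc a b)) (hx₀ : x₀ ∈ Icc a b) (ht : t ∈ Icc a b) :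
    f t = f x₀ + ∫ s in x₀..t, f' s := by
  have hsub : uIcc x₀ t ⊆ Icc a b := uIcc_subset_Icc hx₀ ht
  have hcont : ContinuousOn f (uIcc x₀ t) := fun y hy ↦
    ((hderiv y (hsub hy)).continuousWithinAt).mono hsub
  have hderiv' : ∀ y ∈ Ioo (min x₀ t) (max x₀ t), HasDerivWithinAt f (f' y) (Ioi y) y := by
    intro y hy
    have hab : Icc a b ∈ 𝓝 y := Icc_mem_nhds ((le_min hx₀.1 ht.1).trans_lt hy.1)
      (hy.2.trans_le (max_le hx₀.2 ht.2))
    exact ((hderiv y (mem_of_mem_nhds hab)).hasDerivAt hab).hasDerivWithinAt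
  rw [intervalIntegral.integral_eq_sub_of_hasDeriv_right hcont hderiv'
    (hint.intervalIntegrable_of_mem_Icc hx₀ ht), add_sub_cancel]

theorem eqOn_zero_of_hasDerivWithinAt {q f g : ℝ → ℝ} {a b x₀ : ℝ} (hx₀ : x₀ ∈ Icc a b)
    (hq : IntegrableOn q (Icc a b))
    (hderiv : ∀ x ∈ Icc a b, HasDerivWithinAt f (g x) (Icc a b) x) (hf₀ : f x₀ = 0)
    (hgq : ∀ t ∈ Icc a b, g t = ∫ s in x₀..t, q s * f s) :
    EqOn f 0 (Icc a b) := by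
  have hf : ContinuousOn f (Icc a b) := fun x hx ↦ (hderiv x hx).continuousWithinAt
  have hg : ContinuousOn g (Icc a b) :=
    ((hq.mul_continuousOn hf isCompact_Icc).continuousOn_primitive_Icc hx₀).congr hgq
  refine eqOn_zero_of_integral_system hx₀ hq hf (fun t ht ↦ ?_) hgq
  rw [eq_add_integral_of_hasDerivWithinAt_Icc hderiv hg.integrableOn_Icc hx₀ ht, hf₀, zero_add]

/-- The odd part `(P₋ p)(x) = (p(x) - p(-x)) / 2` of a polynomial. -/
noncomputable def Polynomial.oddPart {K : Type*} [Field K] (p : K[X]) : K[X] :=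
  C (1 / 2) * (p - p.comp (-X))

theorem LinearMap.map_add_comp_neg_X_eq_zero {K M : Type*} [Field K] [AddCommGroup M]
    [Module K M] (L : K[X] →ₗ[K] M) (hL : ∀ k, Even k → L (X ^ k) = 0) (p : K[X]) :
    L (p + p.comp (-X)) = 0 := by
  induction p using Polynomial.induction_on' with
  | add p r hp hr => rw [Polynomial.add_comp, add_add_add_comm, map_add, hp, hr, add_zero]
  | monomial n c =>
    rw [← C_mul_X_pow_eq_monomial, Polynomial.mul_comp, C_comp, Polynomial.pow_comp, X_comp]
    rcases Nat.even_or_odd n with hn | hn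
    · rw [hn.neg_pow, ← mul_add, ← smul_eq_C_mul, map_smul, map_add, hL n hn, add_zero, smul_zero]
    · rw [hn.neg_pow, mul_neg, add_neg_cancel, map_zero]

theorem LinearMap.map_oddPart {K M : Type*} [Field K] [NeZero (2 : K)] [AddCommGroup M]
    [Module K M] (L : K[X] →ₗ[K] M) (hL : ∀ k, Even k → L (X ^ k) = 0) (p : K[X]) :
    L p.oddPart = L p := by
  have hsplit : p = p.oddPart + (1 / 2 : K) • (p + p.comp (-X)) := by
    rw [Polynomial.oddPart, smul_eq_C_mul, ← mul_add, sub_add_add_cancel, ← two_mul, ← mul_assoc,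
      ← C_ofNat, ← C_mul, one_div, inv_mul_cancel₀ two_ne_zero, C_1, one_mul]
  conv_rhs => rw [hsplit]
  rw [map_add, map_smul, L.map_add_comp_neg_X_eq_zero hL, smul_zero, add_zero]

theorem stmt9_general (a b : ℝ) (ha : a ≤ 0) (hb : 0 ≤ b)
    (q : ℝ → ℝ) (hq : IntegrableOn q (Set.Ioo a b))
    (T : Polynomial ℝ →ₗ[ℝ] (ℝ → ℝ)) (φD : ℕ → ℝ → ℝ)
    (hderiv : ∀ k : ℕ, ∀ x ∈ Set.Icc a b,
      HasDerivWithinAt (T (X ^ k)) (φD k x) (Set.Icc a b) x)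
    (hbase : ∀ k : ℕ, 2 ≤ k → ∀ x ∈ Set.Icc a b,
      φD k x = φD k 0 + ∫ s in (0:ℝ)..x,
        (q s * T (X ^ k) s + (k : ℝ) * ((k : ℝ) - 1) * T (X ^ (k - 2)) s))
    (hzero : ∀ k : ℕ, 2 ≤ k → T (X ^ k) 0 = 0 ∧ φD k 0 = 0)
    (hT1 : T 1 = 0) :
    (∀ k : ℕ, Even k → ∀ x ∈ Set.Icc a b, T (X ^ k) x = 0) ∧
    (∀ p : Polynomial ℝ, ∀ x ∈ Set.Icc a b,
      T p x = T (Polynomial.C (1/2 : ℝ) * (p - p.comp (-X))) x) := by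
  have h0 : (0 : ℝ) ∈ Icc a b := ⟨ha, hb⟩
  have hqI : IntegrableOn q (Icc a b) := (integrableOn_Icc_iff_integrableOn_Ioo).2 hq
  have heven : ∀ m : ℕ, EqOn (T (X ^ (2 * m))) 0 (Icc a b) := by
    intro m
    induction m with
    | zero => simp [hT1, EqOn]
    | succ m ih =>
      have hk : 2 ≤ 2 * (m + 1) := by omega
      refine eqOn_zero_of_hasDerivWithinAt h0 hqI (hderiv _) (hzero _ hk).1 fun t ht ↦ ?_
      rw [hbase _ hk t ht, (hzero _ hk).2, zero_add]
      refine intervalIntegral.integral_congr fun s hs ↦ ?_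
      simp [show 2 * (m + 1) - 2 = 2 * m by omega, ih (uIcc_subset_Icc h0 ht hs)]
  have hevenT : ∀ k : ℕ, Even k → ∀ x ∈ Icc a b, T (X ^ k) x = 0 := by
    rintro k ⟨m, rfl⟩ x hx
    simpa [← two_mul] using heven m hx
  refine ⟨hevenT, fun p x hx ↦ ?_⟩
  exact (((LinearMap.proj x).comp T).map_oddPart (fun k hk ↦ hevenT k hk x hx) p).symm

/-- If `T` is a linear operator on polynomials such that `φₖ = T[xᵏ]` is a standard
`L`-base, and `T[1] = 0`, then `T[xᵏ] = 0` for every even `k`, and consequently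
`T = T∘P₋` on polynomials, where `(P₋u)(x) = (u(x)−u(−x))/2`. -/
theorem stmt9 (a b : ℝ) (hab : a < b) (ha : a ≤ 0) (hb : 0 ≤ b)
    (q : ℝ → ℝ) (hq : IntegrableOn q (Set.Ioo a b))
    (T : Polynomial ℝ →ₗ[ℝ] (ℝ → ℝ)) (φD : ℕ → ℝ → ℝ)
    (hderiv : ∀ k : ℕ, ∀ x ∈ Set.Icc a b,
      HasDerivWithinAt (T (X ^ k)) (φD k x) (Set.Icc a b) x)
    (hbase01 : ∀ k : ℕ, k = 0 ∨ k = 1 → ∀ x ∈ Set.Icc a b,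
      φD k x = φD k 0 + ∫ s in (0:ℝ)..x, q s * T (X ^ k) s)
    (hbase : ∀ k : ℕ, 2 ≤ k → ∀ x ∈ Set.Icc a b,
      φD k x = φD k 0 + ∫ s in (0:ℝ)..x,
        (q s * T (X ^ k) s + (k : ℝ) * ((k : ℝ) - 1) * T (X ^ (k - 2)) s))
    (hzero : ∀ k : ℕ, 2 ≤ k → T (X ^ k) 0 = 0 ∧ φD k 0 = 0)
    (hT1 : T 1 = 0) :
    (∀ k : ℕ, Even k → ∀ x ∈ Set.Icc a b, T (X ^ k) x = 0) ∧
    (∀ p : Polynomial ℝ, ∀ x ∈ Set.Icc a b,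
      T p x = T (Polynomial.C (1/2 : ℝ) * (p - p.comp (-X))) x) :=
  stmt9_general a b ha hb q hq T φD hderiv hbase hzero hT1
end

section
/- If T and M are linear operators on polynomials each mapping {xᵏ} to a standard L-base (for the same potential q), and T[1] = M[1], T[x] = M[x], then T = M on all polynomials. -/
/-!
For `k ≥ 2` both `T[xᵏ]` and `M[xᵏ]` solve `y'' = q y + k (k - 1) y_{k-2}` with zero Cauchy data
at `0`, so by induction in steps of two everything reduces to uniqueness for the Cauchy problem
`y'' = q y + r` with `q ∈ L¹`. The difference `u` of two solutions and `v = u'` satisfy the Volterra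
system `u = ∫ v`, `v = ∫ q u`. On an interval `J` around a common zero of `u` and `v` this gives
`sup_J |u| ≤ |J| ‖q‖₁ sup_J |u|`, hence `u = v = 0` on `J` as soon as `|J| ‖q‖₁ < 1`; intervals of
such a fixed length chain across `[a, b]` starting from `0`.
-/

open MeasureTheory Set Polynomial

open intervalIntegral in
theorem eqOn_zero_of_eq_integral_of_mul_integral_norm_lt_one {q u v : ℝ → ℝ} {c d x₀ : ℝ}
    (hx₀ : x₀ ∈ Icc c d) (hq : IntegrableOn q (Icc c d)) (hu : ContinuousOn u (Icc c d))
    (huv : ∀ x ∈ Icc c d, u x = ∫ t in x₀..x, v t)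
    (hvu : ∀ x ∈ Icc c d, v x = ∫ t in x₀..x, q t * u t)
    (hsmall : (d - c) * ∫ t in Icc c d, ‖q t‖ < 1) :
    ∀ x ∈ Icc c d, u x = 0 ∧ v x = 0 := by
  set I := ∫ t in Icc c d, ‖q t‖
  obtain ⟨x₁, hx₁, hmax⟩ := isCompact_Icc.exists_isMaxOn ⟨x₀, hx₀⟩ hu.norm
  set m := ‖u x₁‖
  have hsub : ∀ x ∈ Icc c d, uIoc x₀ x ⊆ Icc c d := fun x hx =>
    uIoc_subset_uIcc.trans (uIcc_subset_Icc hx₀ hx)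
  have hv_le : ∀ x ∈ Icc c d, ‖v x‖ ≤ I * m := fun x hx => calc
    ‖v x‖ ≤ ∫ t in uIoc x₀ x, ‖q t * u t‖ := by
          rw [hvu x hx]; exact norm_integral_le_integral_norm_uIoc
    _ ≤ ∫ t in uIoc x₀ x, ‖q t‖ * m := by
          refine setIntegral_mono_on ?_ ?_ measurableSet_uIoc fun t ht => ?_
          · exact (IntegrableOn.mono_set (hq.mul_continuousOn hu isCompact_Icc) (hsub x hx)).norm
          · exact IntegrableOn.mono_set (hq.norm.mul_const m) (hsub x hx)
          · rw [norm_mul]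
            exact mul_le_mul_of_nonneg_left (hmax (hsub x hx ht)) (norm_nonneg _)
    _ ≤ ∫ t in Icc c d, ‖q t‖ * m :=
          setIntegral_mono_set (hq.norm.mul_const m)
            (ae_of_all _ fun t => by positivity) (hsub x hx).eventuallyLE
    _ = I * m := integral_mul_const m _
  have hu_le : ∀ x ∈ Icc c d, ‖u x‖ ≤ (d - c) * I * m := fun x hx => calc
    ‖u x‖ ≤ I * m * |x - x₀| := by
          rw [huv x hx]
          exact norm_integral_le_of_norm_le_const fun t ht => hv_le t (hsub x hx ht)
    _ ≤ I * m * (d - c) := by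
          gcongr
          rw [abs_le]; constructor <;> linarith [hx.1, hx.2, hx₀.1, hx₀.2]
    _ = (d - c) * I * m := by ring
  have hm : m = 0 := by
    have := hu_le x₁ hx₁
    nlinarith [norm_nonneg (u x₁)]
  intro x hx
  exact ⟨norm_le_zero_iff.mp (hmax hx |>.trans hm.le),
    norm_le_zero_iff.mp ((hv_le x hx).trans (by rw [hm, mul_zero]))⟩

theorem Icc_subset_of_Icc_inter_closedBall_subset {a b p δ : ℝ} {Z : Set ℝ} (hδ : 0 < δ)
    (hp : p ∈ Icc a b ∩ Z)
    (hstep : ∀ x₀ ∈ Icc a b ∩ Z, Icc a b ∩ Metric.closedBall x₀ δ ⊆ Z) :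
    Icc a b ⊆ Z := by
  have hgrow : ∀ n : ℕ, Icc a b ∩ Metric.closedBall p (n * δ) ⊆ Z := by
    intro n
    induction n with
    | zero =>
      rintro x ⟨-, hx⟩
      simp_all
    | succ n ih =>
      rintro x ⟨hx, hxp⟩
      rw [Metric.mem_closedBall, Real.dist_eq] at hxp
      have hn : (0 : ℝ) < n + 1 := by positivity
      -- `x₀` is within `n * δ` of `p` and within `δ` of `x`
      set x₀ := p + (n / (n + 1) : ℝ) • (x - p)
      have hx₀ : x₀ ∈ Icc a b := (convex_Icc a b).add_smul_sub_mem hp.1 hx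
        ⟨by positivity, (div_le_one hn).mpr (by linarith)⟩
      refine hstep x₀ ⟨hx₀, ih ⟨hx₀, ?_⟩⟩ ⟨hx, ?_⟩
      · rw [Metric.mem_closedBall, Real.dist_eq, add_sub_cancel_left, smul_eq_mul, abs_mul,
          abs_of_nonneg (by positivity)]
        push_cast at hxp
        calc (n / (n + 1) : ℝ) * |x - p| ≤ n / (n + 1) * ((n + 1) * δ) := by gcongr
          _ = n * δ := by field_simp
      · have : x - x₀ = (x - p) / (n + 1) := by simp only [x₀, smul_eq_mul]; field_simp; ring
        rw [Metric.mem_closedBall, Real.dist_eq, this, abs_div, abs_of_pos hn, div_le_iff₀ hn]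
        push_cast at hxp
        linarith
  obtain ⟨n, hn⟩ := exists_nat_ge ((b - a) / δ)
  rintro x hx
  refine hgrow n ⟨hx, ?_⟩
  rw [Metric.mem_closedBall, Real.dist_eq, abs_le]
  constructor <;> linarith [(div_le_iff₀ hδ).mp hn, hx.1, hx.2, hp.1.1, hp.1.2]

theorem continuousOn_of_eq_integral {f g : ℝ → ℝ} {a b p : ℝ} (hp : p ∈ Icc a b)
    (hg : IntegrableOn g (Icc a b)) (hfg : ∀ x ∈ Icc a b, f x = ∫ t in p..x, g t) :
    ContinuousOn f (Icc a b) := by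
  have hab : a ≤ b := hp.1.trans hp.2
  have := intervalIntegral.continuousOn_primitive_interval'
    ((intervalIntegrable_iff_integrableOn_Icc_of_le hab).mpr hg) (by rwa [uIcc_of_le hab])
  rw [uIcc_of_le hab] at this
  exact this.congr hfg

theorem eq_integral_of_eq_integral_of_eq_zero {f g : ℝ → ℝ} {a b p x₀ : ℝ} (hp : p ∈ Icc a b)
    (hx₀ : x₀ ∈ Icc a b) (hg : IntegrableOn g (Icc a b))
    (hfg : ∀ x ∈ Icc a b, f x = ∫ t in p..x, g t) (hf₀ : f x₀ = 0) :
    ∀ x ∈ Icc a b, f x = ∫ t in x₀..x, g t := fun x hx => by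
  have hint : ∀ y ∈ Icc a b, IntervalIntegrable g volume p y := fun y hy =>
    (hg.mono_set (uIcc_subset_Icc hp hy)).intervalIntegrable
  rw [← intervalIntegral.integral_interval_sub_left (hint x hx) (hint x₀ hx₀), ← hfg x hx,
    ← hfg x₀ hx₀, hf₀, sub_zero]

theorem eqOn_zero_of_eq_integral {q u v : ℝ → ℝ} {a b p : ℝ} (hp : p ∈ Icc a b)
    (hq : IntegrableOn q (Icc a b)) (hu : ContinuousOn u (Icc a b))
    (huv : ∀ x ∈ Icc a b, u x = ∫ t in p..x, v t)
    (hvu : ∀ x ∈ Icc a b, v x = ∫ t in p..x, q t * u t) :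
    EqOn u 0 (Icc a b) := by
  have hqu : IntegrableOn (fun t => q t * u t) (Icc a b) := hq.mul_continuousOn hu isCompact_Icc
  have hv : ContinuousOn v (Icc a b) := continuousOn_of_eq_integral hp hqu hvu
  obtain ⟨δ, hδ, hδI⟩ := exists_pos_mul_lt one_pos (2 * ∫ t in Icc a b, ‖q t‖)
  suffices Icc a b ⊆ {x | u x = 0 ∧ v x = 0} from fun x hx => (this hx).1
  refine Icc_subset_of_Icc_inter_closedBall_subset hδ ⟨hp, ?_, ?_⟩ ?_
  · rw [huv p hp, intervalIntegral.integral_same]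
  · rw [hvu p hp, intervalIntegral.integral_same]
  rintro x₀ ⟨hx₀, hux₀, hvx₀⟩ x ⟨hx, hxx₀⟩
  rw [Metric.mem_closedBall, Real.dist_eq, abs_le] at hxx₀
  have hsub : Icc (max a (x₀ - δ)) (min b (x₀ + δ)) ⊆ Icc a b :=
    Icc_subset_Icc (le_max_left _ _) (min_le_left _ _)
  have hmem : ∀ y ∈ Icc a b, |y - x₀| ≤ δ → y ∈ Icc (max a (x₀ - δ)) (min b (x₀ + δ)) := by
    intro y hy hyx₀
    rw [abs_le] at hyx₀
    exact ⟨max_le hy.1 (by linarith), le_min hy.2 (by linarith)⟩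
  refine eqOn_zero_of_eq_integral_of_mul_integral_norm_lt_one
    (hmem x₀ hx₀ (by simp [hδ.le])) (hq.mono_set hsub) (hu.mono hsub)
    (fun y hy => eq_integral_of_eq_integral_of_eq_zero hp hx₀ hv.integrableOn_Icc huv hux₀ y
      (hsub hy))
    (fun y hy => eq_integral_of_eq_integral_of_eq_zero hp hx₀ hqu hvu hvx₀ y (hsub hy))
    ?_ x (hmem x hx (abs_le.mpr hxx₀))
  calc _ ≤ (2 * δ) * ∫ t in Icc a b, ‖q t‖ := by
        refine mul_le_mul (by linarith [min_le_right b (x₀ + δ), le_max_right a (x₀ - δ)])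
          (setIntegral_mono_set hq.norm (ae_of_all _ fun t => norm_nonneg _) hsub.eventuallyLE)
          (integral_nonneg fun t => norm_nonneg _) (by positivity)
    _ < 1 := by linarith

theorem integral_eq_sub_of_hasDerivWithinAt_Icc {f f' : ℝ → ℝ} {a b x y : ℝ}
    (hf : ∀ t ∈ Icc a b, HasDerivWithinAt f (f' t) (Icc a b) t) (hf' : IntegrableOn f' (Icc a b))
    (hx : x ∈ Icc a b) (hy : y ∈ Icc a b) :
    ∫ t in x..y, f' t = f y - f x := by
  have hsub : uIcc x y ⊆ Icc a b := uIcc_subset_Icc hx hy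
  refine intervalIntegral.integral_eq_sub_of_hasDeriv_right
    (fun t ht => (hf t (hsub ht)).continuousWithinAt.mono hsub) (fun t ht => ?_)
    (hf'.mono_set hsub).intervalIntegrable
  have ht' : t ∈ Ioo a b := ⟨(le_min hx.1 hy.1).trans_lt ht.1, ht.2.trans_le (max_le hx.2 hy.2)⟩
  exact ((hf t (Ioo_subset_Icc_self ht')).hasDerivAt (Icc_mem_nhds ht'.1 ht'.2)).hasDerivWithinAt

theorem eqOn_of_hasDerivWithinAt_of_eq_integral {q r f g f' g' : ℝ → ℝ} {a b p : ℝ}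
    (hp : p ∈ Icc a b) (hq : IntegrableOn q (Icc a b)) (hr : IntegrableOn r (Icc a b))
    (hf : ∀ x ∈ Icc a b, HasDerivWithinAt f (f' x) (Icc a b) x)
    (hg : ∀ x ∈ Icc a b, HasDerivWithinAt g (g' x) (Icc a b) x)
    (hf' : ∀ x ∈ Icc a b, f' x = f' p + ∫ t in p..x, (q t * f t + r t))
    (hg' : ∀ x ∈ Icc a b, g' x = g' p + ∫ t in p..x, (q t * g t + r t))
    (hfg : f p = g p) (hfg' : f' p = g' p) :
    EqOn f g (Icc a b) := by
  have hfc : ContinuousOn f (Icc a b) := fun x hx => (hf x hx).continuousWithinAt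
  have hgc : ContinuousOn g (Icc a b) := fun x hx => (hg x hx).continuousWithinAt
  have hint : ∀ h : ℝ → ℝ, ContinuousOn h (Icc a b) → ∀ x ∈ Icc a b,
      IntervalIntegrable (fun t => q t * h t + r t) volume p x := fun h hh x hx =>
    (((hq.mul_continuousOn hh isCompact_Icc).add hr).mono_set
      (uIcc_subset_Icc hp hx)).intervalIntegrable
  have hvu : ∀ x ∈ Icc a b, f' x - g' x = ∫ t in p..x, q t * (f t - g t) := by
    intro x hx
    rw [hf' x hx, hg' x hx, hfg', add_sub_add_left_eq_sub,
      ← intervalIntegral.integral_sub (hint f hfc x hx) (hint g hgc x hx)]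
    congr 1 with t
    ring
  have hv : ContinuousOn (fun x => f' x - g' x) (Icc a b) :=
    continuousOn_of_eq_integral hp (hq.mul_continuousOn (hfc.sub hgc) isCompact_Icc) hvu
  have huv : ∀ x ∈ Icc a b, f x - g x = ∫ t in p..x, (f' t - g' t) := fun x hx => by
    rw [integral_eq_sub_of_hasDerivWithinAt_Icc (fun t ht => (hf t ht).sub (hg t ht))
      hv.integrableOn_Icc hp hx, Pi.sub_apply, Pi.sub_apply, hfg, sub_self, sub_zero]
  intro x hx
  exact sub_eq_zero.mp (eqOn_zero_of_eq_integral hp hq (hfc.sub hgc) huv hvu hx)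

theorem stmt11_general (a b : ℝ) (ha : a ≤ 0) (hb : 0 ≤ b)
    (q : ℝ → ℝ) (hq : IntegrableOn q (Set.Ioo a b))
    (T M : Polynomial ℝ →ₗ[ℝ] (ℝ → ℝ)) (φD ψD : ℕ → ℝ → ℝ)
    -- `{T[xᵏ]}` is a standard `L`-base
    (hderivT : ∀ k : ℕ, ∀ x ∈ Set.Icc a b,
      HasDerivWithinAt (T (X ^ k)) (φD k x) (Set.Icc a b) x)
    (hbaseT : ∀ k : ℕ, 2 ≤ k → ∀ x ∈ Set.Icc a b,
      φD k x = φD k 0 + ∫ s in (0:ℝ)..x,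
        (q s * T (X ^ k) s + (k : ℝ) * ((k : ℝ) - 1) * T (X ^ (k - 2)) s))
    (hzeroT : ∀ k : ℕ, 2 ≤ k → T (X ^ k) 0 = 0 ∧ φD k 0 = 0)
    -- `{M[xᵏ]}` is a standard `L`-base
    (hderivM : ∀ k : ℕ, ∀ x ∈ Set.Icc a b,
      HasDerivWithinAt (M (X ^ k)) (ψD k x) (Set.Icc a b) x)
    (hbaseM : ∀ k : ℕ, 2 ≤ k → ∀ x ∈ Set.Icc a b,
      ψD k x = ψD k 0 + ∫ s in (0:ℝ)..x,
        (q s * M (X ^ k) s + (k : ℝ) * ((k : ℝ) - 1) * M (X ^ (k - 2)) s))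
    (hzeroM : ∀ k : ℕ, 2 ≤ k → M (X ^ k) 0 = 0 ∧ ψD k 0 = 0)
    (h1 : T 1 = M 1) (hX : T X = M X) :
    ∀ p : Polynomial ℝ, ∀ x ∈ Set.Icc a b, T p x = M p x := by
  have h0 : (0 : ℝ) ∈ Icc a b := ⟨ha, hb⟩
  have hqI : IntegrableOn q (Icc a b) := (integrableOn_Icc_iff_integrableOn_Ioo).mpr hq
  have hpow : ∀ k, EqOn (T (X ^ k)) (M (X ^ k)) (Icc a b) := by
    intro k
    induction k using Nat.twoStepInduction with
    | zero => simp [h1, EqOn]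
    | one => simp [hX, EqOn]
    | more n ih _ =>
      have hk : 2 ≤ n + 2 := by omega
      have hr : IntegrableOn (fun s => ((n + 2 : ℕ) : ℝ) * ((n + 2 : ℕ) - 1) * T (X ^ n) s)
          (Icc a b) :=
        (continuousOn_const.mul fun x hx => (hderivT n x hx).continuousWithinAt).integrableOn_Icc
      refine eqOn_of_hasDerivWithinAt_of_eq_integral h0 hqI hr (hderivT _) (hderivM _)
        (by simpa using hbaseT _ hk) (fun x hx => ?_)
        ((hzeroT _ hk).1.trans (hzeroM _ hk).1.symm) ((hzeroT _ hk).2.trans (hzeroM _ hk).2.symm)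
      rw [hbaseM _ hk x hx, Nat.add_sub_cancel]
      congr 1
      refine intervalIntegral.integral_congr fun s hs => ?_
      simp only [ih (uIcc_subset_Icc h0 hx hs)]
  intro p x hx
  induction p using Polynomial.induction_on' with
  | add p r hp hr => simp only [map_add, Pi.add_apply, hp, hr]
  | monomial n c =>
    rw [← C_mul_X_pow_eq_monomial, ← smul_eq_C_mul, map_smul, map_smul, Pi.smul_apply,
      Pi.smul_apply, hpow n hx]

/-- If `T` and `M` are linear operators on polynomials, each mapping `{xᵏ}` to a standard
`L`-base for the same potential `q`, and `T[1] = M[1]`, `T[x] = M[x]`, then `T = M`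
on all polynomials. -/
theorem stmt11 (a b : ℝ) (hab : a < b) (ha : a ≤ 0) (hb : 0 ≤ b)
    (q : ℝ → ℝ) (hq : IntegrableOn q (Set.Ioo a b))
    (T M : Polynomial ℝ →ₗ[ℝ] (ℝ → ℝ)) (φD ψD : ℕ → ℝ → ℝ)
    -- `{T[xᵏ]}` is a standard `L`-base
    (hderivT : ∀ k : ℕ, ∀ x ∈ Set.Icc a b,
      HasDerivWithinAt (T (X ^ k)) (φD k x) (Set.Icc a b) x)
    (hbase01T : ∀ k : ℕ, k = 0 ∨ k = 1 → ∀ x ∈ Set.Icc a b,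
      φD k x = φD k 0 + ∫ s in (0:ℝ)..x, q s * T (X ^ k) s)
    (hbaseT : ∀ k : ℕ, 2 ≤ k → ∀ x ∈ Set.Icc a b,
      φD k x = φD k 0 + ∫ s in (0:ℝ)..x,
        (q s * T (X ^ k) s + (k : ℝ) * ((k : ℝ) - 1) * T (X ^ (k - 2)) s))
    (hzeroT : ∀ k : ℕ, 2 ≤ k → T (X ^ k) 0 = 0 ∧ φD k 0 = 0)
    -- `{M[xᵏ]}` is a standard `L`-base
    (hderivM : ∀ k : ℕ, ∀ x ∈ Set.Icc a b,
      HasDerivWithinAt (M (X ^ k)) (ψD k x) (Set.Icc a b) x)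
    (hbase01M : ∀ k : ℕ, k = 0 ∨ k = 1 → ∀ x ∈ Set.Icc a b,
      ψD k x = ψD k 0 + ∫ s in (0:ℝ)..x, q s * M (X ^ k) s)
    (hbaseM : ∀ k : ℕ, 2 ≤ k → ∀ x ∈ Set.Icc a b,
      ψD k x = ψD k 0 + ∫ s in (0:ℝ)..x,
        (q s * M (X ^ k) s + (k : ℝ) * ((k : ℝ) - 1) * M (X ^ (k - 2)) s))
    (hzeroM : ∀ k : ℕ, 2 ≤ k → M (X ^ k) 0 = 0 ∧ ψD k 0 = 0)
    (h1 : T 1 = M 1) (hX : T X = M X) :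
    ∀ p : Polynomial ℝ, ∀ x ∈ Set.Icc a b, T p x = M p x :=
  stmt11_general a b ha hb q hq T M φD ψD hderivT hbaseT hzeroT hderivM hbaseM hzeroM h1 hX
end

section
/- Let q ∈ L¹(−a,a) and let Ω₁ be the closed square in the (u,v)-plane with vertices (−a,0),(0,a),(a,0),(0,−a). Then the Volterra integral equation H(u,v) = (1/2)∫₀ᵘ q(s) ds + ∫₀ᵘ∫₀ᵛ q(α+β) H(α,β) dβ dα has a unique continuous solution H on Ω₁, and it satisfies |H(u,v)| ≤ ‖q‖_{L¹} · exp(a‖q‖_{L¹}) for all (u,v) ∈ Ω₁. -/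
/-!
Extend `q` by zero outside `[-a, a]`, so that it is integrable on `ℝ`, and let `M = ‖q‖_{L¹}`.
If `|H α β| ≤ f |α|` on the rectangle `[0, u] × [0, v]`, the double integral
`∫₀ᵘ∫₀ᵛ q(α+β) H(α,β)` is at most `M ∫₀^{|u|} f`. Hence the `n`-th iterate of the Picard map,
acting on bounded continuous functions of `(u, v)` with `u` clamped to `[-a, a]`, is Lipschitz
with constant `(aM)ⁿ/n!`; some iterate is a contraction and the fixed point is a continuous
solution. The same estimate gives a Gronwall inequality: if `|g| ≤ A + |∫₀ᵘ∫₀ᵛ q(α+β) g(α,β)|` on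
the square then `|g u v| ≤ A exp(M|u|)`. With `A = M/2` this is the bound; with `A = 0`, applied
to the difference of two solutions, it is uniqueness.
-/

open MeasureTheory Set Filter Function Real
open scoped Interval Nat BoundedContinuousFunction

noncomputable def goursatIntegral (q : ℝ → ℝ) (H : ℝ → ℝ → ℝ) (u v : ℝ) : ℝ :=
  ∫ α in (0:ℝ)..u, ∫ β in (0:ℝ)..v, q (α + β) * H α β

def IsGoursatSolution (q : ℝ → ℝ) (a : ℝ) (H : ℝ → ℝ → ℝ) : Prop :=
  ∀ u v, |u| + |v| ≤ a → H u v = 1 / 2 * (∫ s in (0:ℝ)..u, q s) + goursatIntegral q H u v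

lemma uIcc_prod_uIcc_subset {a u v : ℝ} (huv : |u| + |v| ≤ a) :
    [[0, u]] ×ˢ [[0, v]] ⊆ {p : ℝ × ℝ | |p.1| + |p.2| ≤ a} := by
  have abs_le : ∀ {x y : ℝ}, x ∈ [[0, y]] → |x| ≤ |y| := fun hx => by
    simpa using abs_sub_le_of_uIcc_subset_uIcc (uIcc_subset_uIcc left_mem_uIcc hx)
  exact fun p hp => (add_le_add (abs_le hp.1) (abs_le hp.2)).trans huv

lemma isCompact_abs_add_abs_le (a : ℝ) : IsCompact {p : ℝ × ℝ | |p.1| + |p.2| ≤ a} := by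
  refine Metric.isCompact_of_isClosed_isBounded (isClosed_le (by fun_prop) continuous_const)
    ((Metric.isBounded_closedBall (x := 0) (r := a)).subset
      fun p (hp : |p.1| + |p.2| ≤ a) => ?_)
  rw [Metric.mem_closedBall, dist_zero_right, Prod.norm_def, Real.norm_eq_abs, Real.norm_eq_abs]
  exact max_le (by linarith [abs_nonneg p.2]) (by linarith [abs_nonneg p.1])

lemma integral_uIoc_zero_comp_abs (f : ℝ → ℝ) (u : ℝ) :
    ∫ α in Ι 0 u, f |α| = ∫ x in (0:ℝ)..|u|, f x := by
  rcases le_total 0 u with hu | hu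
  · rw [uIoc_of_le hu, ← intervalIntegral.integral_of_le hu, abs_of_nonneg hu]
    refine intervalIntegral.integral_congr fun α hα => ?_
    rw [uIcc_of_le hu] at hα
    simp [abs_of_nonneg hα.1]
  · have h := intervalIntegral.integral_comp_neg (a := u) (b := 0) f
    rw [neg_zero] at h
    rw [uIoc_of_ge hu, ← intervalIntegral.integral_of_le hu, abs_of_nonpos hu, ← h]
    refine intervalIntegral.integral_congr fun α hα => ?_
    rw [uIcc_of_le hu] at hα
    simp [abs_of_nonpos hα.2]

lemma mul_integral_exp_add_pow (M A C b : ℝ) (n : ℕ) :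
    M * ∫ x in (0:ℝ)..b, (A * exp (M * x) + C * ((M * x) ^ n / n !)) =
      A * exp (M * b) - A + C * ((M * b) ^ (n + 1) / (n + 1)!) := by
  rw [← intervalIntegral.integral_const_mul,
    intervalIntegral.integral_eq_sub_of_hasDerivAt
      (f := fun x => A * exp (M * x) + C * ((M * x) ^ (n + 1) / (n + 1)!)) (fun x _ => ?_)
      ((by fun_prop : Continuous fun x =>
        M * (A * exp (M * x) + C * ((M * x) ^ n / n !))).intervalIntegrable _ _)]
  · simp only [mul_zero, exp_zero, mul_one, ne_eq, add_eq_zero, one_ne_zero, and_false,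
      not_false_eq_true, zero_pow, zero_div, add_zero]
    ring
  · have h := (((hasDerivAt_id x).const_mul M).exp.const_mul A).add
      ((((hasDerivAt_id x).const_mul M).pow (n + 1)).const_mul (C / (n + 1)!))
    convert h using 1
    · ext y
      simp only [Pi.add_apply, Pi.pow_apply, id]
      ring
    · simp only [id, Nat.factorial_succ]
      push_cast
      field_simp

theorem exists_isFixedPt_of_dist_iterate_le {X : Type*} [MetricSpace X] [CompleteSpace X]
    [Nonempty X] {f : X → X} {K : ℝ} (hK : 0 ≤ K)
    (hf : ∀ n x y, dist (f^[n] x) (f^[n] y) ≤ K ^ n / n ! * dist x y) :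
    ∃ x, IsFixedPt f x := by
  obtain ⟨n, hn⟩ :=
    ((FloorSemiring.tendsto_pow_div_factorial_atTop K).eventually (gt_mem_nhds one_pos)).exists
  have hc : ContractingWith ⟨K ^ n / n !, by positivity⟩ f^[n] :=
    ⟨hn, LipschitzWith.of_dist_le_mul (hf n)⟩
  exact ⟨_, hc.isFixedPt_fixedPoint_iterate⟩

lemma lipschitzWith_primitive {f : ℝ → ℝ} {K : ℝ}
    (hf : ∀ a b, IntervalIntegrable f volume a b) (hK : ∀ x, |f x| ≤ K) (a : ℝ) :
    LipschitzWith K.toNNReal fun u => ∫ x in a..u, f x := by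
  refine LipschitzWith.of_dist_le_mul fun u u' => ?_
  rw [dist_eq_norm, intervalIntegral.integral_interval_sub_left (hf a u) (hf a u'),
    Real.coe_toNNReal _ ((abs_nonneg _).trans (hK 0)), Real.dist_eq]
  exact intervalIntegral.norm_integral_le_of_norm_le_const fun x _ => hK x

section Goursat

variable {q : ℝ → ℝ} (hq : Integrable q)
include hq

lemma abs_intervalIntegral_comp_add_mul_le (c : ℝ) {f : ℝ → ℝ} {a b C : ℝ}
    (hf : ∀ x ∈ [[a, b]], |f x| ≤ C) :
    |∫ x in a..b, q (c + x) * f x| ≤ C * ∫ x, |q x| := by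
  have hC : 0 ≤ C := (abs_nonneg _).trans (hf a left_mem_uIcc)
  have hqC : Integrable fun x => |q (c + x)| * C := (hq.comp_add_left c).abs.mul_const C
  rw [← Real.norm_eq_abs, intervalIntegral.norm_integral_eq_norm_integral_uIoc]
  calc ‖∫ x in Ι a b, q (c + x) * f x‖ ≤ ∫ x in Ι a b, |q (c + x)| * C := by
        refine norm_integral_le_of_norm_le hqC.integrableOn
          (ae_restrict_of_forall_mem measurableSet_uIoc fun x hx => ?_)
        rw [norm_mul, Real.norm_eq_abs, Real.norm_eq_abs]
        exact mul_le_mul_of_nonneg_left (hf x (uIoc_subset_uIcc hx)) (abs_nonneg _)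
    _ ≤ ∫ x, |q (c + x)| * C :=
        setIntegral_le_integral hqC (ae_of_all _ fun x => by positivity)
    _ = C * ∫ x, |q x| := by
        rw [integral_mul_const, integral_add_left_eq_self (fun x => |q x|) c, mul_comm]

lemma abs_goursatIntegral_le {H : ℝ → ℝ → ℝ} {f : ℝ → ℝ} (hf : Continuous f) {u v : ℝ}
    (hH : ∀ α ∈ [[0, u]], ∀ β ∈ [[0, v]], |H α β| ≤ f α) :
    |goursatIntegral q H u v| ≤ (∫ x, |q x|) * ∫ α in Ι 0 u, f α := by
  rw [goursatIntegral, ← Real.norm_eq_abs, intervalIntegral.norm_integral_eq_norm_integral_uIoc,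
    ← integral_const_mul]
  refine norm_integral_le_of_norm_le (hf.integrableOn_uIoc.const_mul _)
    (ae_restrict_of_forall_mem measurableSet_uIoc fun α hα => ?_)
  rw [Real.norm_eq_abs, mul_comm]
  exact abs_intervalIntegral_comp_add_mul_le hq α (hH α (uIoc_subset_uIcc hα))

lemma abs_goursatIntegral_le_exp_add_pow {H : ℝ → ℝ → ℝ} {A C : ℝ} {n : ℕ} {u v : ℝ}
    (hH : ∀ α ∈ [[0, u]], ∀ β ∈ [[0, v]],
      |H α β| ≤ A * exp ((∫ x, |q x|) * |α|) + C * (((∫ x, |q x|) * |α|) ^ n / n !)) :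
    |goursatIntegral q H u v| ≤ A * exp ((∫ x, |q x|) * |u|) - A
      + C * (((∫ x, |q x|) * |u|) ^ (n + 1) / (n + 1)!) := by
  refine (abs_goursatIntegral_le hq (by fun_prop) hH).trans_eq ?_
  rw [integral_uIoc_zero_comp_abs
    (fun x => A * exp ((∫ x, |q x|) * x) + C * (((∫ x, |q x|) * x) ^ n / n !)),
    mul_integral_exp_add_pow]

lemma abs_goursatIntegral_le_mul {H : ℝ → ℝ → ℝ} {C : ℝ} (hC : ∀ α β, |H α β| ≤ C) (u v : ℝ) :
    |goursatIntegral q H u v| ≤ C * ((∫ x, |q x|) * |u|) := by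
  simpa using abs_goursatIntegral_le_exp_add_pow hq (A := 0) (C := C) (n := 0) (v := v)
    fun α _ β _ => by simpa using hC α β

lemma abs_half_intervalIntegral_add_le (u x : ℝ) :
    |1 / 2 * (∫ s in (0:ℝ)..u, q s) + x| ≤ (∫ s, |q s|) / 2 + |x| := by
  have hprim : |∫ s in (0:ℝ)..u, q s| ≤ ∫ s, |q s| := by
    rw [← Real.norm_eq_abs]
    refine intervalIntegral.norm_integral_le_integral_norm_uIoc.trans ?_
    simpa only [Real.norm_eq_abs] using
      setIntegral_le_integral hq.norm (ae_of_all _ fun s => norm_nonneg (q s))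
  refine (abs_add_le _ _).trans ?_
  rw [abs_mul, abs_of_pos one_half_pos]
  linarith

theorem abs_le_mul_exp_of_abs_le_add_goursatIntegral {g : ℝ → ℝ → ℝ} {a A C : ℝ} (hA : 0 ≤ A)
    (hC : ∀ u v, |u| + |v| ≤ a → |g u v| ≤ C)
    (hg : ∀ u v, |u| + |v| ≤ a → |g u v| ≤ A + |goursatIntegral q g u v|)
    {u v : ℝ} (huv : |u| + |v| ≤ a) : |g u v| ≤ A * exp ((∫ x, |q x|) * |u|) := by
  set M := ∫ x, |q x|
  -- `A exp(M|u|)` is the fixed point of `f ↦ A + M ∫₀^{|u|} f`; the error term shrinks each step.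
  have key : ∀ n : ℕ, ∀ u v, |u| + |v| ≤ a →
      |g u v| ≤ A * exp (M * |u|) + C * ((M * |u|) ^ n / n !) := by
    intro n
    induction n with
    | zero =>
      intro u v huv
      simpa using (hC u v huv).trans (le_add_of_nonneg_left (by positivity))
    | succ n ih =>
      intro u v huv
      have := abs_goursatIntegral_le_exp_add_pow hq fun α hα β hβ =>
        ih α β (uIcc_prod_uIcc_subset huv (mk_mem_prod hα hβ))
      linarith [hg u v huv]
  have hlim : Tendsto (fun n : ℕ => A * exp (M * |u|) + C * ((M * |u|) ^ n / n !)) atTop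
      (nhds (A * exp (M * |u|))) := by
    simpa using ((FloorSemiring.tendsto_pow_div_factorial_atTop (M * |u|)).const_mul C).const_add
      (A * exp (M * |u|))
  exact ge_of_tendsto' hlim fun n => key n u v huv

lemma integrable_comp_add_mul_prod {H : ℝ → ℝ → ℝ} {a b c d : ℝ}
    (hH : ContinuousOn (uncurry H) ([[a, b]] ×ˢ [[c, d]])) :
    Integrable (uncurry fun α β => q (α + β) * H α β)
      ((volume.restrict (Ι a b)).prod (volume.restrict (Ι c d))) := by
  obtain ⟨C, hC⟩ := (isCompact_uIcc.prod isCompact_uIcc).exists_bound_of_continuousOn hH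
  have hshear : IntegrableOn (fun z : ℝ × ℝ => q (z.1 + z.2)) (Ι a b ×ˢ univ) := by
    have hsnd : Integrable (fun z : ℝ × ℝ => q z.2) ((volume.restrict (Ι a b)).prod volume) := by
      simpa only [one_mul] using
        (integrableOn_const (s := Ι a b) (C := (1 : ℝ)) measure_Ioc_lt_top.ne).mul_prod hq
    have hvol : (volume.restrict (Ι a b)).prod (volume : Measure ℝ)
        = volume.restrict (Ι a b ×ˢ univ) := by
      rw [Measure.volume_eq_prod, ← Measure.prod_restrict, Measure.restrict_univ]
    rw [IntegrableOn, ← hvol]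
    exact ((measurePreserving_prod_add (volume.restrict (Ι a b)) volume).integrable_comp
      hsnd.aestronglyMeasurable).2 hsnd
  rw [Measure.prod_restrict, ← Measure.volume_eq_prod]
  refine (hshear.mono_set (prod_mono subset_rfl (subset_univ _))).mul_bdd
    ((hH.aestronglyMeasurable (measurableSet_uIcc.prod measurableSet_uIcc)).mono_set
      (prod_mono uIoc_subset_uIcc uIoc_subset_uIcc))
    (ae_restrict_of_forall_mem (measurableSet_uIoc.prod measurableSet_uIoc) fun z hz =>
      hC z ⟨uIoc_subset_uIcc hz.1, uIoc_subset_uIcc hz.2⟩)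

lemma intervalIntegrable_comp_add_mul {H : ℝ → ℝ → ℝ} {a b c d α : ℝ}
    (hH : ContinuousOn (uncurry H) ([[a, b]] ×ˢ [[c, d]])) (hα : α ∈ [[a, b]]) :
    IntervalIntegrable (fun β => q (α + β) * H α β) volume c d :=
  (hq.comp_add_left α).intervalIntegrable.mul_continuousOn
    (hH.comp (Continuous.continuousOn (by fun_prop)) fun _ hβ => mk_mem_prod hα hβ)

lemma intervalIntegrable_integral_comp_add_mul {H : ℝ → ℝ → ℝ} {a b c d : ℝ}
    (hH : ContinuousOn (uncurry H) ([[a, b]] ×ˢ [[c, d]])) :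
    IntervalIntegrable (fun α => ∫ β in c..d, q (α + β) * H α β) volume a b := by
  rw [intervalIntegrable_iff]
  simp_rw [intervalIntegral.intervalIntegral_eq_integral_uIoc, smul_eq_mul]
  exact (integrable_comp_add_mul_prod hq hH).integral_prod_left.const_mul _

lemma goursatIntegral_eq_integral_swap {H : ℝ → ℝ → ℝ} {u v : ℝ}
    (hH : ContinuousOn (uncurry H) ([[0, u]] ×ˢ [[0, v]])) :
    goursatIntegral q H u v = ∫ β in (0:ℝ)..v, ∫ α in (0:ℝ)..u, q (α + β) * H α β := by
  simp_rw [goursatIntegral, intervalIntegral.intervalIntegral_eq_integral_uIoc, integral_smul]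
  rw [integral_integral_swap (integrable_comp_add_mul_prod hq hH), smul_comm]

lemma goursatIntegral_sub {H G : ℝ → ℝ → ℝ} {u v : ℝ}
    (hH : ContinuousOn (uncurry H) ([[0, u]] ×ˢ [[0, v]]))
    (hG : ContinuousOn (uncurry G) ([[0, u]] ×ˢ [[0, v]])) :
    goursatIntegral q H u v - goursatIntegral q G u v = goursatIntegral q (H - G) u v := by
  rw [goursatIntegral, goursatIntegral, ← intervalIntegral.integral_sub
    (intervalIntegrable_integral_comp_add_mul hq hH)
    (intervalIntegrable_integral_comp_add_mul hq hG)]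
  refine intervalIntegral.integral_congr fun α hα => ?_
  rw [← intervalIntegral.integral_sub (intervalIntegrable_comp_add_mul hq hH hα)
    (intervalIntegrable_comp_add_mul hq hG hα)]
  simp only [Pi.sub_apply, mul_sub]

lemma continuous_goursatIntegral {H : ℝ → ℝ → ℝ} (hH : Continuous (uncurry H)) {C : ℝ}
    (hC : ∀ α β, |H α β| ≤ C) : Continuous (uncurry (goursatIntegral q H)) := by
  refine (LipschitzWith.uncurry (Kα := (C * ∫ x, |q x|).toNNReal)
    (Kβ := (C * ∫ x, |q x|).toNNReal) (fun v => ?_) fun u => ?_).continuous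
  · exact lipschitzWith_primitive
      (fun _ _ => intervalIntegrable_integral_comp_add_mul hq hH.continuousOn)
      (fun α => abs_intervalIntegral_comp_add_mul_le hq α fun β _ => hC α β) 0
  · have hswap : Continuous (uncurry fun β α => H α β) := hH.comp continuous_swap
    have := lipschitzWith_primitive (f := fun β => ∫ α in (0:ℝ)..u, q (β + α) * H α β)
      (fun _ _ => intervalIntegrable_integral_comp_add_mul hq hswap.continuousOn)
      (fun β => abs_intervalIntegral_comp_add_mul_le hq β fun α _ => hC α β) 0
    convert this using 2 with v
    rw [goursatIntegral_eq_integral_swap hq hH.continuousOn]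
    simp only [add_comm]

end Goursat

section Picard

variable {q : ℝ → ℝ} (hq : Integrable q) {a : ℝ} (ha : 0 ≤ a)

-- Clamping `u` to `[-a, a]` keeps the image bounded and does not change it on the strip `|u| ≤ a`.
noncomputable def picardMap (H : ℝ × ℝ →ᵇ ℝ) : ℝ × ℝ →ᵇ ℝ :=
  .ofNormedAddCommGroup
    (fun p => 1 / 2 * (∫ s in (0:ℝ)..projIcc (-a) a (neg_le_self ha) p.1, q s)
      + goursatIntegral q (curry H) (projIcc (-a) a (neg_le_self ha) p.1) p.2)
    (by
      have hclamp : Continuous fun p : ℝ × ℝ => (projIcc (-a) a (neg_le_self ha) p.1 : ℝ) :=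
        continuous_subtype_val.comp (continuous_projIcc.comp continuous_fst)
      exact (continuous_const.mul ((hq.continuous_primitive 0).comp hclamp)).add
        ((continuous_goursatIntegral hq (H := curry H) H.continuous
          fun α β => H.norm_coe_le_norm (α, β)).comp (hclamp.prodMk continuous_snd)))
    ((∫ x, |q x|) / 2 + ‖H‖ * ((∫ x, |q x|) * a))
    (fun p => by
      refine (abs_half_intervalIntegral_add_le hq _ _).trans ?_
      grw [abs_goursatIntegral_le_mul hq (H := curry H) fun α β => H.norm_coe_le_norm (α, β)]
      gcongr
      exact abs_le.2 (projIcc (-a) a (neg_le_self ha) p.1).2)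

lemma picardMap_apply (H : ℝ × ℝ →ᵇ ℝ) (p : ℝ × ℝ) :
    picardMap hq ha H p = 1 / 2 * (∫ s in (0:ℝ)..projIcc (-a) a (neg_le_self ha) p.1, q s)
      + goursatIntegral q (curry H) (projIcc (-a) a (neg_le_self ha) p.1) p.2 :=
  rfl

lemma picardMap_apply_of_abs_le (H : ℝ × ℝ →ᵇ ℝ) {u : ℝ} (hu : |u| ≤ a) (v : ℝ) :
    picardMap hq ha H (u, v)
      = 1 / 2 * (∫ s in (0:ℝ)..u, q s) + goursatIntegral q (curry H) u v := by
  rw [picardMap_apply, projIcc_of_mem _ (abs_le.1 hu)]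

lemma abs_iterate_picardMap_sub_le (n : ℕ) (H G : ℝ × ℝ →ᵇ ℝ) (p : ℝ × ℝ) :
    |(picardMap hq ha)^[n] H p - (picardMap hq ha)^[n] G p|
      ≤ dist H G * (((∫ x, |q x|) * |(projIcc (-a) a (neg_le_self ha) p.1 : ℝ)|) ^ n / n !) := by
  induction n generalizing p with
  | zero => simpa [← Real.dist_eq] using H.dist_coe_le_dist (g := G) p
  | succ n ih =>
    set u := projIcc (-a) a (neg_le_self ha) p.1
    rw [iterate_succ_apply', iterate_succ_apply', picardMap_apply, picardMap_apply,
      add_sub_add_left_eq_sub, goursatIntegral_sub hq (H := curry _) (G := curry _)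
        ((picardMap hq ha)^[n] H).continuous.continuousOn
        ((picardMap hq ha)^[n] G).continuous.continuousOn]
    have hu : [[0, (u : ℝ)]] ⊆ Icc (-a) a := uIcc_subset_Icc ⟨neg_nonpos.2 ha, ha⟩ u.2
    simpa using abs_goursatIntegral_le_exp_add_pow hq (A := 0) (v := p.2) fun α hα β _ => by
      simpa [projIcc_of_mem _ (hu hα)] using ih (α, β)

lemma dist_iterate_picardMap_le (n : ℕ) (H G : ℝ × ℝ →ᵇ ℝ) :
    dist ((picardMap hq ha)^[n] H) ((picardMap hq ha)^[n] G)
      ≤ ((∫ x, |q x|) * a) ^ n / n ! * dist H G := by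
  refine (BoundedContinuousFunction.dist_le (by positivity)).2 fun p => ?_
  rw [Real.dist_eq, mul_comm]
  refine (abs_iterate_picardMap_sub_le hq ha n H G p).trans ?_
  gcongr
  exact abs_le.2 (projIcc (-a) a (neg_le_self ha) p.1).2

end Picard

section Solution

variable {q : ℝ → ℝ} (hq : Integrable q) {a : ℝ} {H G : ℝ → ℝ → ℝ}
include hq

lemma exists_isGoursatSolution (ha : 0 ≤ a) :
    ∃ W : ℝ × ℝ →ᵇ ℝ, IsGoursatSolution q a (curry W) := by
  obtain ⟨W, hW⟩ := exists_isFixedPt_of_dist_iterate_le (by positivity)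
    (dist_iterate_picardMap_le hq ha)
  refine ⟨W, fun u v huv => ?_⟩
  rw [curry_apply, ← picardMap_apply_of_abs_le hq ha W (by linarith [abs_nonneg v]), hW.eq]

lemma IsGoursatSolution.abs_le_half_mul_exp (hH : IsGoursatSolution q a H)
    (hHc : ContinuousOn (uncurry H) {p : ℝ × ℝ | |p.1| + |p.2| ≤ a}) {u v : ℝ}
    (huv : |u| + |v| ≤ a) : |H u v| ≤ (∫ x, |q x|) / 2 * exp ((∫ x, |q x|) * |u|) := by
  obtain ⟨C, hC⟩ := (isCompact_abs_add_abs_le a).exists_bound_of_continuousOn hHc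
  refine abs_le_mul_exp_of_abs_le_add_goursatIntegral hq (g := H) (by positivity)
    (fun u v huv => hC (u, v) huv) (fun u v huv => ?_) huv
  rw [hH u v huv]
  exact abs_half_intervalIntegral_add_le hq _ _

lemma IsGoursatSolution.eq (hH : IsGoursatSolution q a H) (hG : IsGoursatSolution q a G)
    (hHc : ContinuousOn (uncurry H) {p : ℝ × ℝ | |p.1| + |p.2| ≤ a})
    (hGc : ContinuousOn (uncurry G) {p : ℝ × ℝ | |p.1| + |p.2| ≤ a}) {u v : ℝ}
    (huv : |u| + |v| ≤ a) : H u v = G u v := by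
  have hdiff : ∀ u v, |u| + |v| ≤ a → (H - G) u v = goursatIntegral q (H - G) u v :=
    fun u v huv => by
      rw [Pi.sub_apply, Pi.sub_apply, hH u v huv, hG u v huv, add_sub_add_left_eq_sub,
        goursatIntegral_sub hq (hHc.mono (uIcc_prod_uIcc_subset huv))
          (hGc.mono (uIcc_prod_uIcc_subset huv))]
  obtain ⟨C, hC⟩ := (isCompact_abs_add_abs_le a).exists_bound_of_continuousOn (hHc.sub hGc)
  have := abs_le_mul_exp_of_abs_le_add_goursatIntegral hq (g := H - G) le_rfl
    (fun u v huv => hC (u, v) huv) (fun u v huv => by rw [zero_add, ← hdiff u v huv]) huv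
  simpa [sub_eq_zero] using this

end Solution

lemma isGoursatSolution_indicator_iff {q : ℝ → ℝ} {a : ℝ} {H : ℝ → ℝ → ℝ} :
    IsGoursatSolution ((Icc (-a) a).indicator q) a H ↔ IsGoursatSolution q a H := by
  refine forall₃_congr fun u v huv => ?_
  have hmem : ∀ α ∈ [[0, u]], ∀ β ∈ [[0, v]], α + β ∈ Icc (-a) a := fun α hα β hβ =>
    abs_le.1 ((abs_add_le α β).trans (uIcc_prod_uIcc_subset huv (mk_mem_prod hα hβ)))
  have hprim : ∫ s in (0:ℝ)..u, (Icc (-a) a).indicator q s = ∫ s in (0:ℝ)..u, q s :=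
    intervalIntegral.integral_congr fun s hs =>
      indicator_of_mem (by simpa using hmem s hs 0 left_mem_uIcc) q
  have hgour : goursatIntegral ((Icc (-a) a).indicator q) H u v = goursatIntegral q H u v :=
    intervalIntegral.integral_congr fun α hα => intervalIntegral.integral_congr fun β hβ => by
      simp only [indicator_of_mem (hmem α hα β hβ)]
  rw [hprim, hgour]

/-- For `q ∈ L¹(−a,a)`, the Volterra-Goursat integral equation
`H(u,v) = (1/2)∫₀ᵘ q + ∫₀ᵘ∫₀ᵛ q(α+β)H(α,β) dβ dα` has a unique continuous solution on
the closed square `Ω₁ = {|u|+|v| ≤ a}`, and `|H(u,v)| ≤ ‖q‖_{L¹}·exp(a‖q‖_{L¹})`. -/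
theorem stmt13 (a : ℝ) (ha : 0 < a)
    (q : ℝ → ℝ) (hq : IntegrableOn q (Set.Ioo (-a) a)) :
    ∃ H : ℝ → ℝ → ℝ,
      ContinuousOn (fun p : ℝ × ℝ => H p.1 p.2) {p : ℝ × ℝ | |p.1| + |p.2| ≤ a} ∧
      (∀ u v : ℝ, |u| + |v| ≤ a →
        H u v = (1/2) * (∫ s in (0:ℝ)..u, q s)
          + ∫ α in (0:ℝ)..u, ∫ β in (0:ℝ)..v, q (α + β) * H α β) ∧
      (∀ u v : ℝ, |u| + |v| ≤ a →
        |H u v| ≤ (∫ x in Set.Ioo (-a) a, |q x|) *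
          Real.exp (a * ∫ x in Set.Ioo (-a) a, |q x|)) ∧
      (∀ H₂ : ℝ → ℝ → ℝ,
        ContinuousOn (fun p : ℝ × ℝ => H₂ p.1 p.2) {p : ℝ × ℝ | |p.1| + |p.2| ≤ a} →
        (∀ u v : ℝ, |u| + |v| ≤ a →
          H₂ u v = (1/2) * (∫ s in (0:ℝ)..u, q s)
            + ∫ α in (0:ℝ)..u, ∫ β in (0:ℝ)..v, q (α + β) * H₂ α β) →
        ∀ u v : ℝ, |u| + |v| ≤ a → H₂ u v = H u v) := by
  set q₀ := (Icc (-a) a).indicator q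
  have hq₀ : Integrable q₀ :=
    (integrable_indicator_iff measurableSet_Icc).2 ((integrableOn_Icc_iff_integrableOn_Ioo).2 hq)
  have hM : ∫ x, |q₀ x| = ∫ x in Ioo (-a) a, |q x| := by
    rw [← integral_Icc_eq_integral_Ioo, ← integral_indicator measurableSet_Icc]
    congr 1 with x
    exact (congrFun (indicator_comp_of_zero (g := (|·| : ℝ → ℝ)) abs_zero) x).symm
  obtain ⟨W, hW⟩ := exists_isGoursatSolution hq₀ ha.le
  have hWc : ContinuousOn (uncurry (curry W)) {p : ℝ × ℝ | |p.1| + |p.2| ≤ a} :=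
    W.continuous.continuousOn
  refine ⟨curry W, hWc, isGoursatSolution_indicator_iff.1 hW, fun u v huv => ?_,
    fun H₂ hH₂ hH₂eq u v huv => (isGoursatSolution_indicator_iff.2 hH₂eq).eq hq₀ hW hH₂ hWc huv⟩
  have hu : |u| ≤ a := by linarith [abs_nonneg v]
  have hM₀ : 0 ≤ ∫ x, |q₀ x| := integral_nonneg fun x => abs_nonneg _
  calc |curry W u v| ≤ (∫ x, |q₀ x|) / 2 * exp ((∫ x, |q₀ x|) * |u|) :=
        hW.abs_le_half_mul_exp hq₀ hWc huv
    _ ≤ (∫ x, |q₀ x|) * exp (a * ∫ x, |q₀ x|) := by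
        rw [mul_comm a]
        gcongr
        linarith
    _ = _ := by rw [hM]
end

section
/- In the successive-approximation scheme for the Goursat integral equation, the iterates H₀(u,v) = (1/2)∫₀ᵘ q(s) ds and Hₙ(u,v) = ∫₀ᵘ∫₀ᵛ q(α+β)Hₙ₋₁(α,β) dβ dα satisfy the bound |Hₙ(u,v)| ≤ ‖q‖_{L¹} · (a‖q‖_{L¹})ⁿ / n! for all n ≥ 0 and (u,v) ∈ Ω₁, so that the series ∑ₙ Hₙ converges uniformly on Ω₁. -/
/-!
Only the values of `q` on a subinterval of `[-a, a]` enter the inner integral, so it is bounded by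
`‖q‖_{L¹}` times the bound already known for `Hₙ`. The bound `C (‖q‖|u|)ⁿ / n!` therefore
propagates: integrating `‖q‖ C (‖q‖|α|)ⁿ / n!` over `α` between `0` and `u` gives
`C (‖q‖|u|)ⁿ⁺¹ / (n+1)!`. On `Ω₁` we have `|u| ≤ a`, and the resulting bounds are summable, so the
Weierstrass M-test gives uniform convergence.
-/

open MeasureTheory Set Filter
open scoped Interval

theorem uIcc_subset_Icc_neg_of_abs_le {s t a : ℝ} (hs : |s| ≤ a) (ht : |t| ≤ a) :
    [[s, t]] ⊆ Icc (-a) a :=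
  uIcc_subset_Icc (abs_le.mp hs) (abs_le.mp ht)

theorem abs_le_abs_of_mem_uIoc_zero {x u : ℝ} (hx : x ∈ Ι 0 u) : |x| ≤ |u| := by
  simpa using abs_sub_left_of_mem_uIcc (uIoc_subset_uIcc hx)

theorem abs_intervalIntegral_le_setIntegral_abs {f : ℝ → ℝ} {S : Set ℝ} {s t : ℝ}
    (hf : IntegrableOn f S) (hst : [[s, t]] ⊆ S) :
    |∫ x in s..t, f x| ≤ ∫ x in S, |f x| :=
  calc |∫ x in s..t, f x| ≤ ∫ x in Ι s t, |f x| := by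
        simpa only [Real.norm_eq_abs] using
          intervalIntegral.norm_integral_le_integral_norm_uIoc (f := f) (μ := volume)
    _ ≤ ∫ x in S, |f x| :=
        setIntegral_mono_set hf.abs (.of_forall fun _ ↦ abs_nonneg _)
          (uIoc_subset_uIcc.trans hst).eventuallyLE

theorem abs_intervalIntegral_comp_add_mul_le_s14 {q g : ℝ → ℝ} {S : Set ℝ} {α v M : ℝ}
    (hq : IntegrableOn q S) (hS : [[α, α + v]] ⊆ S) (hM : 0 ≤ M)
    (hg : ∀ β ∈ Ι 0 v, |g β| ≤ M) :
    |∫ β in (0:ℝ)..v, q (α + β) * g β| ≤ (∫ x in S, |q x|) * M := by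
  have hqα : IntervalIntegrable (fun β ↦ q (α + β)) volume 0 v := by
    simpa using ((hq.mono_set hS).intervalIntegrable).comp_add_left α
  calc |∫ β in (0:ℝ)..v, q (α + β) * g β| ≤ |∫ β in (0:ℝ)..v, |q (α + β)| * M| := by
        rw [← Real.norm_eq_abs]
        refine intervalIntegral.norm_integral_le_abs_of_norm_le
          ((ae_restrict_mem measurableSet_uIoc).mono fun β hβ ↦ ?_) (hqα.abs.mul_const M)
        rw [Real.norm_eq_abs, abs_mul]
        exact mul_le_mul_of_nonneg_left (hg β hβ) (abs_nonneg _)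
    _ = |(∫ x in α..α + v, |q x|)| * M := by
        rw [intervalIntegral.integral_mul_const, abs_mul, abs_of_nonneg hM,
          intervalIntegral.integral_comp_add_left (fun x ↦ |q x|), add_zero]
    _ ≤ (∫ x in S, |q x|) * M := by
        gcongr
        simpa using abs_intervalIntegral_le_setIntegral_abs hq.abs hS

theorem abs_intervalIntegral_abs_pow (n : ℕ) (u : ℝ) :
    |∫ x in (0:ℝ)..u, |x| ^ n| = |u| ^ (n + 1) / (n + 1) := by
  wlog hu : 0 ≤ u generalizing u
  · have hneg : ∫ x in (0:ℝ)..u, |x| ^ n = ∫ x in -u..0, |x| ^ n := by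
      simpa using intervalIntegral.integral_comp_neg (a := 0) (b := u) fun x ↦ |x| ^ n
    rw [← abs_neg u, ← this (-u) (by linarith), hneg, intervalIntegral.integral_symm, abs_neg]
  have hpow : ∫ x in (0:ℝ)..u, |x| ^ n = ∫ x in (0:ℝ)..u, x ^ n :=
    intervalIntegral.integral_congr fun x hx ↦ by
      rw [uIcc_of_le hu] at hx
      rw [abs_of_nonneg hx.1]
  rw [hpow, integral_pow, abs_of_nonneg hu]
  rw [zero_pow n.succ_ne_zero, sub_zero]
  exact abs_of_nonneg (by positivity)

theorem abs_intervalIntegral_mul_pow_div_factorial (n : ℕ) (u : ℝ) {C Q : ℝ}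
    (hC : 0 ≤ C) (hQ : 0 ≤ Q) :
    |∫ α in (0:ℝ)..u, Q * (C * (Q * |α|) ^ n / n.factorial)| =
      C * (Q * |u|) ^ (n + 1) / (n + 1).factorial := by
  have hpull : ∫ α in (0:ℝ)..u, Q * (C * (Q * |α|) ^ n / n.factorial) =
      C * Q ^ (n + 1) / n.factorial * ∫ α in (0:ℝ)..u, |α| ^ n := by
    rw [← intervalIntegral.integral_const_mul]
    congr 1 with α
    ring
  rw [hpull, abs_mul, abs_intervalIntegral_abs_pow,
    abs_of_nonneg (by positivity), Nat.factorial_succ]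
  push_cast
  field_simp
  ring

theorem abs_iterate_le_of_abs_base_le {a C : ℝ} {q : ℝ → ℝ} {H : ℕ → ℝ → ℝ → ℝ}
    (hq : IntegrableOn q (Icc (-a) a)) (hC : 0 ≤ C)
    (h0 : ∀ u v, |u| + |v| ≤ a → |H 0 u v| ≤ C)
    (hrec : ∀ n u v, H (n + 1) u v = ∫ α in (0:ℝ)..u, ∫ β in (0:ℝ)..v, q (α + β) * H n α β)
    (n : ℕ) {u v : ℝ} (huv : |u| + |v| ≤ a) :
    |H n u v| ≤ C * ((∫ x in Icc (-a) a, |q x|) * |u|) ^ n / n.factorial := by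
  induction n generalizing u v with
  | zero => simpa using h0 u v huv
  | succ n ih =>
    set Q := ∫ x in Icc (-a) a, |q x|
    have hQ : 0 ≤ Q := integral_nonneg fun _ ↦ abs_nonneg _
    have hinner : ∀ α ∈ Ι 0 u,
        ‖∫ β in (0:ℝ)..v, q (α + β) * H n α β‖ ≤ Q * (C * (Q * |α|) ^ n / n.factorial) := by
      intro α hα
      have hαu := abs_le_abs_of_mem_uIoc_zero hα
      refine abs_intervalIntegral_comp_add_mul_le_s14 hq
        (uIcc_subset_Icc_neg_of_abs_le (by linarith [abs_nonneg v])
          (by linarith [abs_add_le α v])) (by positivity)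
        fun β hβ ↦ ih (by linarith [abs_le_abs_of_mem_uIoc_zero hβ])
    rw [hrec, ← abs_intervalIntegral_mul_pow_div_factorial n u hC hQ, ← Real.norm_eq_abs]
    exact intervalIntegral.norm_integral_le_abs_of_norm_le
      ((ae_restrict_mem measurableSet_uIoc).mono hinner)
      (Continuous.intervalIntegrable (by fun_prop) _ _)

theorem stmt14_general (a : ℝ)
    (q : ℝ → ℝ) (hq : IntegrableOn q (Set.Ioo (-a) a))
    (H : ℕ → ℝ → ℝ → ℝ)
    (h0 : ∀ u v : ℝ, H 0 u v = (1/2) * ∫ s in (0:ℝ)..u, q s)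
    (hrec : ∀ n : ℕ, ∀ u v : ℝ,
      H (n + 1) u v = ∫ α in (0:ℝ)..u, ∫ β in (0:ℝ)..v, q (α + β) * H n α β) :
    (∀ n : ℕ, ∀ u v : ℝ, |u| + |v| ≤ a →
      |H n u v| ≤ (∫ x in Set.Ioo (-a) a, |q x|) *
        (a * ∫ x in Set.Ioo (-a) a, |q x|) ^ n / n.factorial) ∧
    TendstoUniformlyOn
      (fun N : ℕ => fun p : ℝ × ℝ => ∑ n ∈ Finset.range N, H n p.1 p.2)
      (fun p : ℝ × ℝ => ∑' n : ℕ, H n p.1 p.2) atTop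
      {p : ℝ × ℝ | |p.1| + |p.2| ≤ a} := by
  set Q := ∫ x in Ioo (-a) a, |q x|
  have hqIcc : IntegrableOn q (Icc (-a) a) := hq.mono_set_ae Ioo_ae_eq_Icc.symm.le
  have hQIcc : ∫ x in Icc (-a) a, |q x| = Q := setIntegral_congr_set Ioo_ae_eq_Icc.symm
  have hQ : 0 ≤ Q := integral_nonneg fun _ ↦ abs_nonneg _
  have hbase : ∀ u v, |u| + |v| ≤ a → |H 0 u v| ≤ Q := by
    intro u v huv
    have hu : |u| ≤ a := by linarith [abs_nonneg v]
    calc |H 0 u v| = 1 / 2 * |∫ s in (0:ℝ)..u, q s| := by rw [h0, abs_mul]; norm_num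
      _ ≤ 1 / 2 * Q := by
        rw [← hQIcc]
        gcongr
        exact abs_intervalIntegral_le_setIntegral_abs hqIcc
          (uIcc_subset_Icc_neg_of_abs_le (by simpa using (abs_nonneg u).trans hu) hu)
      _ ≤ Q := by linarith
  have hbound : ∀ n u v, |u| + |v| ≤ a → |H n u v| ≤ Q * (a * Q) ^ n / n.factorial := by
    intro n u v huv
    refine (abs_iterate_le_of_abs_base_le hqIcc hQ hbase hrec n huv).trans ?_
    rw [hQIcc, mul_comm a]
    gcongr
    linarith [abs_nonneg v]
  refine ⟨hbound, tendstoUniformlyOn_tsum_nat ?_ fun n p hp ↦ hbound n p.1 p.2 hp⟩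
  simpa [mul_div_assoc] using (Real.summable_pow_div_factorial (a * Q)).mul_left Q

/-- The successive approximations `H₀(u,v) = (1/2)∫₀ᵘ q`,
`Hₙ(u,v) = ∫₀ᵘ∫₀ᵛ q(α+β)Hₙ₋₁(α,β) dβ dα` satisfy
`|Hₙ(u,v)| ≤ ‖q‖_{L¹}(a‖q‖_{L¹})ⁿ/n!` on the square `Ω₁ = {|u|+|v| ≤ a}`,
and hence the series `∑ₙ Hₙ` converges uniformly on `Ω₁`. -/
theorem stmt14 (a : ℝ) (ha : 0 < a)
    (q : ℝ → ℝ) (hq : IntegrableOn q (Set.Ioo (-a) a))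
    (H : ℕ → ℝ → ℝ → ℝ)
    (h0 : ∀ u v : ℝ, H 0 u v = (1/2) * ∫ s in (0:ℝ)..u, q s)
    (hrec : ∀ n : ℕ, ∀ u v : ℝ,
      H (n + 1) u v = ∫ α in (0:ℝ)..u, ∫ β in (0:ℝ)..v, q (α + β) * H n α β) :
    (∀ n : ℕ, ∀ u v : ℝ, |u| + |v| ≤ a →
      |H n u v| ≤ (∫ x in Set.Ioo (-a) a, |q x|) *
        (a * ∫ x in Set.Ioo (-a) a, |q x|) ^ n / n.factorial) ∧
    TendstoUniformlyOn
      (fun N : ℕ => fun p : ℝ × ℝ => ∑ n ∈ Finset.range N, H n p.1 p.2)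
      (fun p : ℝ × ℝ => ∑' n : ℕ, H n p.1 p.2) atTop
      {p : ℝ × ℝ | |p.1| + |p.2| ≤ a} :=
  stmt14_general a q hq H h0 hrec
end

section
/- Let q, q̃ ∈ L¹(−a,a) and let H, H̃ be the respective unique continuous solutions of H(u,v) = (1/2)∫₀ᵘ q + ∫₀ᵘ∫₀ᵛ q(α+β)H(α,β) dβ dα on the square Ω₁. Then sup_{Ω₁} |H̃ − H| ≤ C‖q̃ − q‖_{L¹} · exp(a‖q̃‖_{L¹}), where C = 1/2 + a·sup_{Ω₁}|H|. In particular, the map q ↦ H is continuous from L¹(−a,a) to C(Ω₁). -/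
/-!
Extend `q` and `q̃` by zero outside `[-a, a]`; on `Ω₁` this changes nothing, since there
`α + β ∈ [-a, a]`. Then `M = H̃ - H` satisfies
`M(u, v) = ½ ∫₀ᵘ (q̃ - q) + ∫₀ᵘ∫₀ᵛ ((q̃ - q)(α + β) H(α, β) + q̃(α + β) M(α, β)) dβ dα`,
and translation invariance of the `L¹` norm bounds each inner integral by `‖q̃ - q‖₁ sup |H|`,
resp. `‖q̃‖₁ φ(|α|)`, where `φ(t) = sup {|M(u, v)| : (u, v) ∈ Ω₁, |u| ≤ t}`. Hence
`φ(t) ≤ C ‖q̃ - q‖₁ + ‖q̃‖₁ ∫₀ᵗ φ`, and Grönwall's inequality gives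
`φ(t) ≤ C ‖q̃ - q‖₁ exp(t ‖q̃‖₁)`; finally `|u| ≤ a`.
-/

open MeasureTheory Set Function Real
open scoped Interval Topology

lemma abs_le_abs_of_mem_uIcc_zero {x u : ℝ} (hx : x ∈ [[0, u]]) : |x| ≤ |u| := by
  simpa using abs_sub_left_of_mem_uIcc hx

lemma volume_uIoc_ne_top (a b : ℝ) : volume (Ι a b) ≠ ⊤ := by
  rw [Real.volume_uIoc]
  exact ENNReal.ofReal_ne_top

lemma abs_intervalIntegral_le_integral_abs {f : ℝ → ℝ} (hf : Integrable f) (a b : ℝ) :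
    |∫ x in a..b, f x| ≤ ∫ x, |f x| := by
  simpa only [Real.norm_eq_abs] using intervalIntegral.norm_integral_le_integral_norm_uIoc.trans
    (setIntegral_le_integral hf.norm (ae_of_all _ fun _ => norm_nonneg _))

lemma setIntegral_comp_add_le_integral {g : ℝ → ℝ} (hg : Integrable g) (hg0 : ∀ x, 0 ≤ g x)
    (α : ℝ) (s : Set ℝ) : ∫ β in s, g (α + β) ≤ ∫ x, g x := by
  rw [← integral_add_left_eq_self g α]
  exact setIntegral_le_integral (hg.comp_add_left α) (ae_of_all _ fun _ => hg0 _)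

lemma setIntegral_uIoc_comp_abs (g : ℝ → ℝ) (u : ℝ) :
    ∫ α in Ι 0 u, g |α| = ∫ s in 0..|u|, g s := by
  rcases le_total 0 u with hu | hu
  · rw [uIoc_of_le hu, abs_of_nonneg hu, intervalIntegral.integral_of_le hu]
    exact setIntegral_congr_fun measurableSet_Ioc fun α hα => by rw [abs_of_pos hα.1]
  · rw [uIoc_of_ge hu, abs_of_nonpos hu, ← intervalIntegral.integral_of_le hu, ← neg_zero,
      ← intervalIntegral.integral_comp_neg, neg_zero]
    refine intervalIntegral.integral_congr fun α hα => ?_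
    rw [uIcc_of_le hu] at hα
    simp only [abs_of_nonpos hα.2]

lemma integral_abs_indicator_Icc (f : ℝ → ℝ) (a b : ℝ) :
    ∫ x, |(Icc a b).indicator f x| = ∫ x in Ioo a b, |f x| := by
  rw [← integral_Icc_eq_integral_Ioo, ← integral_indicator measurableSet_Icc]
  congr 1 with x
  by_cases hx : x ∈ Icc a b <;> simp [hx]

lemma integrable_comp_add_prod_restrict {f : ℝ → ℝ} (hf : Integrable f) {s t : Set ℝ}
    (hs : volume s ≠ ⊤) :
    Integrable (fun p : ℝ × ℝ => f (p.1 + p.2))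
      ((volume.restrict s).prod (volume.restrict t)) := by
  have hmeas : AEStronglyMeasurable (fun p : ℝ × ℝ => f (p.1 + p.2))
      ((volume.restrict s).prod (volume.restrict t)) := by
    rw [Measure.prod_restrict]
    exact (hf.aestronglyMeasurable.comp_snd.comp_quasiMeasurePreserving
      (measurePreserving_prod_add volume volume).quasiMeasurePreserving).restrict
  refine ⟨hmeas, ?_⟩
  rw [HasFiniteIntegral, lintegral_prod _ hmeas.enorm]
  calc ∫⁻ x in s, ∫⁻ y in t, ‖f (x + y)‖ₑ
      ≤ ∫⁻ _ in s, ∫⁻ y, ‖f y‖ₑ := lintegral_mono fun x =>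
        (setLIntegral_le_lintegral _ _).trans (lintegral_add_left_eq_self (fun y => ‖f y‖ₑ) x).le
    _ = (∫⁻ y, ‖f y‖ₑ) * volume s := setLIntegral_const _ _
    _ < ⊤ := ENNReal.mul_lt_top hf.2 hs.lt_top

section IteratedIntegral

variable {F G : ℝ → ℝ → ℝ} {u v : ℝ}

lemma intervalIntegrable_intervalIntegral_of_integrable_prod
    (hF : Integrable (uncurry F) ((volume.restrict (Ι 0 u)).prod (volume.restrict (Ι 0 v)))) :
    IntervalIntegrable (fun α => ∫ β in 0..v, F α β) volume 0 u := by
  simp_rw [intervalIntegrable_iff, intervalIntegral.intervalIntegral_eq_integral_uIoc,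
    smul_eq_mul]
  exact hF.integral_prod_left.const_mul _

lemma intervalIntegral_intervalIntegral_sub
    (hF : Integrable (uncurry F) ((volume.restrict (Ι 0 u)).prod (volume.restrict (Ι 0 v))))
    (hG : Integrable (uncurry G) ((volume.restrict (Ι 0 u)).prod (volume.restrict (Ι 0 v)))) :
    ∫ α in 0..u, ∫ β in 0..v, (F α β - G α β) =
      (∫ α in 0..u, ∫ β in 0..v, F α β) - ∫ α in 0..u, ∫ β in 0..v, G α β := by
  rw [← intervalIntegral.integral_sub (intervalIntegrable_intervalIntegral_of_integrable_prod hF)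
    (intervalIntegrable_intervalIntegral_of_integrable_prod hG)]
  refine intervalIntegral.integral_congr_ae ?_
  filter_upwards [(ae_restrict_iff' measurableSet_uIoc).1 hF.prod_right_ae,
    (ae_restrict_iff' measurableSet_uIoc).1 hG.prod_right_ae] with α hFα hGα hα
  exact intervalIntegral.integral_sub (intervalIntegrable_iff.2 (hFα hα))
    (intervalIntegrable_iff.2 (hGα hα))

lemma abs_intervalIntegral_intervalIntegral_le {b : ℝ → ℝ → ℝ} {B : ℝ → ℝ}
    (hFb : ∀ α ∈ Ι 0 u, ∀ β ∈ Ι 0 v, |F α β| ≤ b α β)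
    (hb : ∀ α ∈ Ι 0 u, IntegrableOn (b α) (Ι 0 v))
    (hbB : ∀ α ∈ Ι 0 u, ∫ β in Ι 0 v, b α β ≤ B α) (hB : IntegrableOn B (Ι 0 u)) :
    |∫ α in 0..u, ∫ β in 0..v, F α β| ≤ ∫ α in Ι 0 u, B α := by
  have habs {c : ℝ} {g : ℝ → ℝ} : |∫ x in 0..c, g x| ≤ ∫ x in Ι 0 c, |g x| := by
    simpa only [Real.norm_eq_abs] using
      intervalIntegral.norm_integral_le_integral_norm_uIoc (f := g) (a := 0) (b := c) (μ := volume)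
  refine habs.trans (integral_mono_of_nonneg (ae_of_all _ fun _ => abs_nonneg _) hB
    (ae_restrict_of_forall_mem measurableSet_uIoc fun α hα => ?_))
  calc |∫ β in 0..v, F α β| ≤ ∫ β in Ι 0 v, |F α β| := habs
    _ ≤ ∫ β in Ι 0 v, b α β := integral_mono_of_nonneg (ae_of_all _ fun _ => abs_nonneg _)
        (hb α hα) (ae_restrict_of_forall_mem measurableSet_uIoc (hFb α hα))
    _ ≤ B α := hbB α hα

end IteratedIntegral

lemma le_mul_exp_of_le_add_mul_integral {φ : ℝ → ℝ} {C K : ℝ} (hK : 0 ≤ K) (hφ : Monotone φ)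
    (h : ∀ t, 0 ≤ t → φ t ≤ C + K * ∫ s in 0..t, φ s) {t : ℝ} (ht : 0 ≤ t) :
    φ t ≤ C * exp (K * t) := by
  set Ψ : ℝ → ℝ := fun y => C + K * ∫ s in 0..y, φ s
  have hΨ : Continuous Ψ := continuous_const.add (continuous_const.mul
    (intervalIntegral.continuous_primitive (fun _ _ => hφ.intervalIntegrable) 0))
  -- Since `φ` is monotone, the slope of `Ψ` on `[x, z]` is at most `K * φ z ≤ K * Ψ z`.
  have hslope (x z : ℝ) (hx : 0 ≤ x) (hxz : x < z) : (z - x)⁻¹ * (Ψ z - Ψ x) ≤ K * Ψ z := by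
    have hzx : 0 < z - x := sub_pos.2 hxz
    have hint : ∫ s in x..z, φ s ≤ (z - x) * φ z := by
      simpa using intervalIntegral.integral_mono_on hxz.le hφ.intervalIntegrable
        (intervalIntegrable_const (μ := volume)) fun s hs => hφ hs.2
    calc (z - x)⁻¹ * (Ψ z - Ψ x) = (z - x)⁻¹ * (K * ∫ s in x..z, φ s) := by
          rw [← intervalIntegral.integral_interval_sub_left hφ.intervalIntegrable
            hφ.intervalIntegrable]
          ring
      _ ≤ (z - x)⁻¹ * (K * ((z - x) * φ z)) := by gcongr
      _ = K * φ z := by field_simp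
      _ ≤ K * Ψ z := by gcongr; exact h z (hx.trans hxz.le)
  have hgron := le_gronwallBound_of_liminf_deriv_right_le (f' := fun x => K * Ψ x) (δ := C)
    (K := K) (ε := 0) hΨ.continuousOn (fun x hx r hr => ?_) (by simp [Ψ]) (fun x _ => by simp)
    t ⟨ht, le_rfl⟩
  · rw [gronwallBound_ε0, sub_zero] at hgron
    exact (h t ht).trans hgron
  · have hlim : ∀ᶠ z in 𝓝[>] x, K * Ψ z < r :=
      (((continuous_const.mul hΨ).tendsto x).mono_left nhdsWithin_le_nhds).eventually_lt_const hr
    exact ((hlim.and self_mem_nhdsWithin).mono fun z hz =>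
      (hslope x z hx.1 hz.2).trans_lt hz.1).frequently

/-- The square `Ω₁` with vertices `(±a, 0)`, `(0, ±a)`. -/
def diamond (a : ℝ) : Set (ℝ × ℝ) := {p | |p.1| + |p.2| ≤ a}

lemma isCompact_diamond (a : ℝ) : IsCompact (diamond a) := by
  refine Metric.isCompact_of_isClosed_isBounded (isClosed_le (by fun_prop) continuous_const)
    ((Metric.isBounded_closedBall (x := (0 : ℝ × ℝ)) (r := a)).subset fun p hp => ?_)
  rw [mem_closedBall_zero_iff, Prod.norm_def, Real.norm_eq_abs, Real.norm_eq_abs]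
  exact max_le (by linarith [abs_nonneg p.2, hp.out]) (by linarith [abs_nonneg p.1, hp.out])

lemma uIoc_prod_uIoc_subset_diamond {a u v : ℝ} (huv : |u| + |v| ≤ a) :
    Ι 0 u ×ˢ Ι 0 v ⊆ diamond a := fun _ hp =>
  (add_le_add (abs_le_abs_of_mem_uIcc_zero (uIoc_subset_uIcc hp.1))
    (abs_le_abs_of_mem_uIcc_zero (uIoc_subset_uIcc hp.2))).trans huv

lemma integrable_comp_add_mul_of_continuousOn {a u v : ℝ} {f : ℝ → ℝ} (hf : Integrable f)
    {G : ℝ → ℝ → ℝ} (hG : ContinuousOn (uncurry G) (diamond a)) (huv : |u| + |v| ≤ a) :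
    Integrable (fun p : ℝ × ℝ => f (p.1 + p.2) * G p.1 p.2)
      ((volume.restrict (Ι 0 u)).prod (volume.restrict (Ι 0 v))) := by
  obtain ⟨M, hM⟩ := (isCompact_diamond a).exists_bound_of_continuousOn hG
  have hrect := uIoc_prod_uIoc_subset_diamond huv
  refine (integrable_comp_add_prod_restrict hf (volume_uIoc_ne_top 0 u)).mul_bdd (c := M) ?_ ?_
  · rw [Measure.prod_restrict]
    exact (hG.aestronglyMeasurable (isCompact_diamond a).measurableSet).mono_set hrect
  · rw [Measure.prod_restrict]
    exact ae_restrict_of_forall_mem (measurableSet_uIoc.prod measurableSet_uIoc)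
      fun p hp => hM p (hrect hp)

/-- The function `φ` of the proof sketch; it is `0` where no point of `s` has `|p.1| ≤ t`. -/
noncomputable def truncSup (s : Set (ℝ × ℝ)) (f : ℝ × ℝ → ℝ) (t : ℝ) : ℝ :=
  sSup (f '' {p ∈ s | |p.1| ≤ t})

section TruncSup

variable {s : Set (ℝ × ℝ)} {f : ℝ × ℝ → ℝ}

lemma le_truncSup (hf : BddAbove (f '' s)) {p : ℝ × ℝ} (hp : p ∈ s) :
    f p ≤ truncSup s f |p.1| :=
  le_csSup (hf.mono (image_mono fun _ hq => hq.1)) ⟨p, ⟨hp, le_rfl⟩, rfl⟩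

lemma truncSup_le {t c : ℝ} (hne : ∃ p ∈ s, |p.1| ≤ t) (h : ∀ p ∈ s, |p.1| ≤ t → f p ≤ c) :
    truncSup s f t ≤ c := by
  obtain ⟨p, hp, hpt⟩ := hne
  refine csSup_le ⟨f p, p, ⟨hp, hpt⟩, rfl⟩ ?_
  rintro _ ⟨p, ⟨hp, hpt⟩, rfl⟩
  exact h p hp hpt

lemma truncSup_nonneg (hf0 : ∀ p ∈ s, 0 ≤ f p) (t : ℝ) : 0 ≤ truncSup s f t :=
  Real.sSup_nonneg (by rintro _ ⟨p, hp, rfl⟩; exact hf0 p hp.1)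

lemma monotone_truncSup (hf0 : ∀ p ∈ s, 0 ≤ f p) (hf : BddAbove (f '' s)) :
    Monotone (truncSup s f) := by
  intro t t' htt'
  rcases eq_empty_or_nonempty {p ∈ s | |p.1| ≤ t} with he | ⟨p, hp, hpt⟩
  · rw [truncSup, he, image_empty, Real.sSup_empty]
    exact truncSup_nonneg hf0 t'
  · exact csSup_le_csSup (hf.mono (image_mono fun _ hq => hq.1)) ⟨f p, p, ⟨hp, hpt⟩, rfl⟩
      (image_mono fun _ hq => ⟨hq.1, hq.2.trans htt'⟩)

end TruncSup

def SolvesGoursatEq (a : ℝ) (q : ℝ → ℝ) (H : ℝ → ℝ → ℝ) : Prop :=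
  ∀ u v : ℝ, |u| + |v| ≤ a →
    H u v = (1/2) * (∫ s in (0:ℝ)..u, q s) + ∫ α in (0:ℝ)..u, ∫ β in (0:ℝ)..v, q (α + β) * H α β

namespace SolvesGoursatEq

variable {a u v : ℝ} {q qt : ℝ → ℝ} {H Ht : ℝ → ℝ → ℝ}

lemma indicator_Icc (hH : SolvesGoursatEq a q H) :
    SolvesGoursatEq a ((Icc (-a) a).indicator q) H := by
  intro u v huv
  have hu : |u| ≤ a := by linarith [abs_nonneg v]
  rw [hH u v huv]
  congr 1
  · refine congrArg _ (intervalIntegral.integral_congr fun x hx => (indicator_of_mem ?_ q).symm)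
    exact abs_le.1 ((abs_le_abs_of_mem_uIcc_zero hx).trans hu)
  · refine intervalIntegral.integral_congr fun α hα => ?_
    refine intervalIntegral.integral_congr fun β hβ => ?_
    rw [indicator_of_mem]
    exact abs_le.1 ((abs_add_le α β).trans ((add_le_add (abs_le_abs_of_mem_uIcc_zero hα)
      (abs_le_abs_of_mem_uIcc_zero hβ)).trans huv))

lemma sub_eq (hq : Integrable q) (hqt : Integrable qt)
    (hHc : ContinuousOn (uncurry H) (diamond a)) (hHtc : ContinuousOn (uncurry Ht) (diamond a))
    (hH : SolvesGoursatEq a q H) (hHt : SolvesGoursatEq a qt Ht) (huv : |u| + |v| ≤ a) :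
    Ht u v - H u v = (1/2) * (∫ s in (0:ℝ)..u, (qt s - q s)) +
      ∫ α in (0:ℝ)..u, ∫ β in (0:ℝ)..v, (qt (α + β) * Ht α β - q (α + β) * H α β) := by
  rw [hH u v huv, hHt u v huv,
    intervalIntegral.integral_sub hqt.intervalIntegrable hq.intervalIntegrable,
    intervalIntegral_intervalIntegral_sub (F := fun α β => qt (α + β) * Ht α β)
      (G := fun α β => q (α + β) * H α β) (integrable_comp_add_mul_of_continuousOn hqt hHtc huv)
      (integrable_comp_add_mul_of_continuousOn hq hHc huv)]
  ring

end SolvesGoursatEq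

section Estimate

variable {a u v : ℝ} {q qt : ℝ → ℝ} {H Ht : ℝ → ℝ → ℝ} {MH : ℝ} {φ : ℝ → ℝ}

lemma abs_intervalIntegral_intervalIntegral_sub_le (hq : Integrable q) (hqt : Integrable qt)
    (hMH : ∀ u v : ℝ, |u| + |v| ≤ a → |H u v| ≤ MH) (hφ : Monotone φ)
    (hφM : ∀ x y : ℝ, |x| + |y| ≤ a → |Ht x y - H x y| ≤ φ |x|) (huv : |u| + |v| ≤ a) :
    |∫ α in (0:ℝ)..u, ∫ β in (0:ℝ)..v, (qt (α + β) * Ht α β - q (α + β) * H α β)| ≤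
      |u| * (MH * ∫ x, |qt x - q x|) + (∫ x, |qt x|) * ∫ s in (0:ℝ)..|u|, φ s := by
  set D := ∫ x, |qt x - q x|
  set Q := ∫ x, |qt x|
  have h00 : |(0:ℝ)| + |(0:ℝ)| ≤ a := by
    simpa using (add_nonneg (abs_nonneg u) (abs_nonneg v)).trans huv
  have hMH0 : 0 ≤ MH := (abs_nonneg _).trans (hMH 0 0 h00)
  have hφ0 (α : ℝ) : 0 ≤ φ |α| := (abs_nonneg _).trans ((hφM 0 0 h00).trans (hφ (by simp)))
  have hφint : IntegrableOn (fun α => φ |α|) (Ι 0 u) := by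
    refine Measure.integrableOn_of_bounded (M := φ |u|) (volume_uIoc_ne_top 0 u)
      (hφ.measurable.comp measurable_abs).aestronglyMeasurable
      (ae_restrict_of_forall_mem measurableSet_uIoc fun α hα => ?_)
    rw [Real.norm_eq_abs, abs_of_nonneg (hφ0 α)]
    exact hφ (abs_le_abs_of_mem_uIcc_zero (uIoc_subset_uIcc hα))
  have hconst : IntegrableOn (fun _ => MH * D) (Ι 0 u) :=
    integrableOn_const (volume_uIoc_ne_top 0 u)
  have hBint : ∫ α in Ι 0 u, (MH * D + Q * φ |α|) =
      |u| * (MH * D) + Q * ∫ s in (0:ℝ)..|u|, φ s := by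
    rw [integral_add hconst (hφint.const_mul Q), setIntegral_const, integral_const_mul,
      setIntegral_uIoc_comp_abs, measureReal_def, Real.volume_uIoc,
      ENNReal.toReal_ofReal (abs_nonneg _), sub_zero, smul_eq_mul]
  rw [← hBint]
  refine abs_intervalIntegral_intervalIntegral_le
    (b := fun α β => MH * |qt (α + β) - q (α + β)| + φ |α| * |qt (α + β)|)
    (fun α hα β hβ => ?_) (fun α _ => ?_) (fun α _ => ?_) (hconst.add (hφint.const_mul Q))
  · have hαβ : |α| + |β| ≤ a := uIoc_prod_uIoc_subset_diamond huv (mk_mem_prod hα hβ)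
    calc |qt (α + β) * Ht α β - q (α + β) * H α β|
        = |(qt (α + β) - q (α + β)) * H α β + qt (α + β) * (Ht α β - H α β)| := by ring_nf
      _ ≤ |qt (α + β) - q (α + β)| * MH + |qt (α + β)| * φ |α| := by
        refine (abs_add_le _ _).trans (add_le_add ?_ ?_) <;> rw [abs_mul]
        · exact mul_le_mul_of_nonneg_left (hMH α β hαβ) (abs_nonneg _)
        · exact mul_le_mul_of_nonneg_left (hφM α β hαβ) (abs_nonneg _)
      _ = _ := by ring
  all_goals
    have hd : Integrable fun β => |qt (α + β) - q (α + β)| := ((hqt.sub hq).comp_add_left α).abs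
    have ht : Integrable fun β => |qt (α + β)| := (hqt.comp_add_left α).abs
  · exact ((hd.const_mul MH).add (ht.const_mul _)).integrableOn
  · rw [integral_add (hd.const_mul MH).integrableOn (ht.const_mul _).integrableOn,
      integral_const_mul, integral_const_mul]
    have hD := setIntegral_comp_add_le_integral (hqt.sub hq).abs (fun _ => abs_nonneg _) α (Ι 0 v)
    have hQ := setIntegral_comp_add_le_integral hqt.abs (fun _ => abs_nonneg _) α (Ι 0 v)
    simp only [Pi.sub_apply] at hD
    nlinarith [hφ0 α]

lemma abs_sub_le_of_solvesGoursatEq (hq : Integrable q) (hqt : Integrable qt)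
    (hHc : ContinuousOn (uncurry H) (diamond a)) (hHtc : ContinuousOn (uncurry Ht) (diamond a))
    (hH : SolvesGoursatEq a q H) (hHt : SolvesGoursatEq a qt Ht)
    (hMH : ∀ u v : ℝ, |u| + |v| ≤ a → |H u v| ≤ MH) (hφ : Monotone φ)
    (hφM : ∀ x y : ℝ, |x| + |y| ≤ a → |Ht x y - H x y| ≤ φ |x|) (huv : |u| + |v| ≤ a) :
    |Ht u v - H u v| ≤
      (1/2 + a * MH) * (∫ x, |qt x - q x|) + (∫ x, |qt x|) * ∫ s in (0:ℝ)..|u|, φ s := by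
  have hMH0 : 0 ≤ MH := (abs_nonneg _).trans
    (hMH 0 0 (by simpa using (add_nonneg (abs_nonneg u) (abs_nonneg v)).trans huv))
  have hD0 : 0 ≤ ∫ x, |qt x - q x| := integral_nonneg fun _ => abs_nonneg _
  have hu : |u| ≤ a := by linarith [abs_nonneg v]
  have hsingle := abs_intervalIntegral_le_integral_abs (hqt.sub hq) 0 u
  have hdouble := abs_intervalIntegral_intervalIntegral_sub_le hq hqt hMH hφ hφM huv
  have hua : |u| * (MH * ∫ x, |qt x - q x|) ≤ a * (MH * ∫ x, |qt x - q x|) :=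
    mul_le_mul_of_nonneg_right hu (mul_nonneg hMH0 hD0)
  simp only [Pi.sub_apply] at hsingle
  rw [hH.sub_eq hq hqt hHc hHtc hHt huv]
  calc _ ≤ |(1/2) * ∫ s in (0:ℝ)..u, (qt s - q s)| + _ := abs_add_le _ _
    _ ≤ _ := by
      rw [abs_mul, abs_of_pos (by norm_num : (0:ℝ) < 1/2)]
      nlinarith

lemma abs_sub_le_of_solvesGoursatEq_of_integrableOn (hq : IntegrableOn q (Ioo (-a) a))
    (hqt : IntegrableOn qt (Ioo (-a) a))
    (hHc : ContinuousOn (uncurry H) (diamond a)) (hHtc : ContinuousOn (uncurry Ht) (diamond a))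
    (hH : SolvesGoursatEq a q H) (hHt : SolvesGoursatEq a qt Ht)
    (hMH : ∀ u v : ℝ, |u| + |v| ≤ a → |H u v| ≤ MH) (hφ : Monotone φ)
    (hφM : ∀ x y : ℝ, |x| + |y| ≤ a → |Ht x y - H x y| ≤ φ |x|) (huv : |u| + |v| ≤ a) :
    |Ht u v - H u v| ≤ (1/2 + a * MH) * (∫ x in Ioo (-a) a, |qt x - q x|) +
      (∫ x in Ioo (-a) a, |qt x|) * ∫ s in (0:ℝ)..|u|, φ s := by
  have hIcc {g : ℝ → ℝ} (hg : IntegrableOn g (Ioo (-a) a)) :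
      Integrable ((Icc (-a) a).indicator g) :=
    ((integrableOn_Icc_iff_integrableOn_Ioo).2 hg).integrable_indicator measurableSet_Icc
  have hD : ∫ x, |(Icc (-a) a).indicator qt x - (Icc (-a) a).indicator q x| =
      ∫ x in Ioo (-a) a, |qt x - q x| := by
    rw [← integral_abs_indicator_Icc, indicator_sub]
  simpa only [hD, integral_abs_indicator_Icc] using abs_sub_le_of_solvesGoursatEq (hIcc hq)
    (hIcc hqt) hHc hHtc hH.indicator_Icc hHt.indicator_Icc hMH hφ hφM huv

end Estimate

/-- Continuous dependence of the Goursat kernel on the potential: if `H`, `H̃` are the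
continuous solutions of the integral equation for `q`, `q̃` on the square
`Ω₁ = {|u|+|v| ≤ a}`, and `MH` bounds `|H|` on `Ω₁`, then
`|H̃ − H| ≤ (1/2 + a·MH)·‖q̃ − q‖_{L¹}·exp(a‖q̃‖_{L¹})` on `Ω₁`.
In particular, `q ↦ H` is continuous from `L¹(−a,a)` to `C(Ω₁)`. -/
theorem stmt15 (a : ℝ) (ha : 0 < a)
    (q qt : ℝ → ℝ)
    (hq : IntegrableOn q (Set.Ioo (-a) a)) (hqt : IntegrableOn qt (Set.Ioo (-a) a))
    (H Ht : ℝ → ℝ → ℝ)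
    (hHcont : ContinuousOn (fun p : ℝ × ℝ => H p.1 p.2) {p : ℝ × ℝ | |p.1| + |p.2| ≤ a})
    (hHtcont : ContinuousOn (fun p : ℝ × ℝ => Ht p.1 p.2) {p : ℝ × ℝ | |p.1| + |p.2| ≤ a})
    (hH : ∀ u v : ℝ, |u| + |v| ≤ a →
      H u v = (1/2) * (∫ s in (0:ℝ)..u, q s)
        + ∫ α in (0:ℝ)..u, ∫ β in (0:ℝ)..v, q (α + β) * H α β)
    (hHt : ∀ u v : ℝ, |u| + |v| ≤ a →
      Ht u v = (1/2) * (∫ s in (0:ℝ)..u, qt s)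
        + ∫ α in (0:ℝ)..u, ∫ β in (0:ℝ)..v, qt (α + β) * Ht α β)
    (MH : ℝ) (hMH : ∀ u v : ℝ, |u| + |v| ≤ a → |H u v| ≤ MH) :
    ∀ u v : ℝ, |u| + |v| ≤ a →
      |Ht u v - H u v| ≤ (1/2 + a * MH) * (∫ x in Set.Ioo (-a) a, |qt x - q x|) *
        Real.exp (a * ∫ x in Set.Ioo (-a) a, |qt x|) := by
  set φ := truncSup (diamond a) fun p => |Ht p.1 p.2 - H p.1 p.2|
  have hbdd : BddAbove ((fun p => |Ht p.1 p.2 - H p.1 p.2|) '' diamond a) :=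
    (isCompact_diamond a).bddAbove_image (hHtcont.sub hHcont).abs
  have hφ : Monotone φ := monotone_truncSup (fun _ _ => abs_nonneg _) hbdd
  have hφM (x y : ℝ) (hxy : |x| + |y| ≤ a) : |Ht x y - H x y| ≤ φ |x| :=
    le_truncSup (p := (x, y)) hbdd hxy
  set D := ∫ x in Ioo (-a) a, |qt x - q x|
  set Q := ∫ x in Ioo (-a) a, |qt x|
  have hQ0 : 0 ≤ Q := integral_nonneg fun _ => abs_nonneg _
  have hrec (t : ℝ) (ht : 0 ≤ t) : φ t ≤ (1/2 + a * MH) * D + Q * ∫ s in (0:ℝ)..t, φ s := by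
    refine truncSup_le ⟨0, by simpa [diamond] using ha.le, by simpa using ht⟩ fun p hp hpt => ?_
    refine (abs_sub_le_of_solvesGoursatEq_of_integrableOn hq hqt hHcont hHtcont hH hHt hMH hφ hφM
      hp).trans (add_le_add le_rfl (mul_le_mul_of_nonneg_left ?_ hQ0))
    exact intervalIntegral.integral_mono_interval le_rfl (abs_nonneg _) hpt
      (ae_of_all _ fun s => truncSup_nonneg (fun _ _ => abs_nonneg _) s) hφ.intervalIntegrable
  intro u v huv
  have hCD : 0 ≤ (1/2 + a * MH) * D := by
    have : 0 ≤ MH := (abs_nonneg _).trans (hMH 0 0 (by simpa using ha.le))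
    have : 0 ≤ D := integral_nonneg fun _ => abs_nonneg _
    positivity
  calc |Ht u v - H u v| ≤ φ |u| := hφM u v huv
    _ ≤ (1/2 + a * MH) * D * exp (Q * |u|) :=
      le_mul_exp_of_le_add_mul_integral hQ0 hφ hrec (abs_nonneg u)
    _ ≤ (1/2 + a * MH) * D * exp (a * Q) := by
      refine mul_le_mul_of_nonneg_left (exp_le_exp.2 ?_) hCD
      rw [mul_comm a]
      exact mul_le_mul_of_nonneg_left (by linarith [abs_nonneg v]) hQ0
end
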